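/- arXiv:2107.09218 — 4 statements merged into one kernel-verified Lean document; each statement's English description precedes it below -/
import Mathlib

section
/- For probability measures μ₁, μ₂ on the real line with cumulative distribution functions F₁, F₂, the p-Wasserstein distance satisfies W_p^p(μ₁,μ₂) = ∫₀¹ |F₁⁻¹(s) − F₂⁻¹(s)|^p ds, where F⁻¹ denotes the left-continuous quantile (generalized inverse) function. -/
/-!
The quantile coupling, the law of `(F₁⁻¹ U, F₂⁻¹ U)` for `U` uniform on `(0, 1)`, has marginals
`μ₁` and `μ₂` because `F⁻¹ s ≤ x ↔ s ≤ F x`, and its cost is the right-hand side. It is optimal: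
for `r ≥ 0` the hinge `(|x - y| - r)₊` is the length of
`{t | y ≤ t, t + r < x} ∪ {t | x ≤ t, t + r < y}`, so by Tonelli its expectation under a coupling
`π` is `∫ π(Y ≤ t, t + r < X) + π(X ≤ t, t + r < Y) dt`. The two integrands are at least
`(F₂ t - F₁ (t + r))₊` and `(F₁ t - F₂ (t + r))₊`, with equality for the quantile coupling.
For `p > 1`, `|w| ^ p = ∫₀^∞ p (p - 1) r ^ (p - 2) (|w| - r)₊ dr` carries the comparison from
hinges to the cost `|x - y| ^ p`.
-/

open MeasureTheory Set

/-- The p-th power Wasserstein cost between probability measures on ℝ,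
defined as the infimum over all couplings of `E|X-Y|^p`. -/
noncomputable def WassersteinP (p : ℝ) (μ ν : Measure ℝ) : ℝ :=
  sInf {c : ℝ | ∃ π : Measure (ℝ × ℝ), IsProbabilityMeasure π ∧
    π.map Prod.fst = μ ∧ π.map Prod.snd = ν ∧
    c = ∫ x, |x.1 - x.2| ^ p ∂π}

/-- The left-continuous quantile (generalized inverse distribution) function of a measure. -/
noncomputable def quantileFn (μ : Measure ℝ) (s : ℝ) : ℝ :=
  sInf {x : ℝ | s ≤ (μ (Iic x)).toReal}

open ProbabilityTheory ENNReal

section Quantile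

variable {μ : Measure ℝ} [IsProbabilityMeasure μ]

theorem quantileFn_le_iff {s : ℝ} (hs : s ∈ Ioo 0 1) {x : ℝ} :
    quantileFn μ s ≤ x ↔ s ≤ cdf μ x := by
  have hset : {x : ℝ | s ≤ (μ (Iic x)).toReal} = {x | s ≤ cdf μ x} := by
    simp [cdf_eq_real, measureReal_def]
  have hne : {x | s ≤ cdf μ x}.Nonempty :=
    ((tendsto_cdf_atTop μ).eventually (eventually_ge_nhds hs.2)).exists
  have hbdd : BddBelow {x | s ≤ cdf μ x} := by
    obtain ⟨y, hy⟩ := ((tendsto_cdf_atBot μ).eventually (eventually_lt_nhds hs.1)).exists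
    exact ⟨y, fun z hz => le_of_not_gt fun hzy =>
      hz.not_gt ((monotone_cdf μ hzy.le).trans_lt hy)⟩
  rw [quantileFn, hset]
  refine ⟨fun h => le_trans ?_ (monotone_cdf μ h), fun h => csInf_le hbdd h⟩
  -- right-continuity of the cdf puts the infimum in the set
  refine ge_of_tendsto (((cdf μ).right_continuous _).mono Ioi_subset_Ici_self) ?_
  filter_upwards [self_mem_nhdsWithin] with x hx
  obtain ⟨z, hz, hzx⟩ := exists_lt_of_csInf_lt hne hx
  exact hz.trans (monotone_cdf μ hzx.le)

theorem monotoneOn_quantileFn : MonotoneOn (quantileFn μ) (Ioo 0 1) :=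
  fun _ ha _ hb hab => (quantileFn_le_iff ha).2 (hab.trans ((quantileFn_le_iff hb).1 le_rfl))

theorem aemeasurable_quantileFn : AEMeasurable (quantileFn μ) (volume.restrict (Ioo 0 1)) :=
  aemeasurable_restrict_of_monotoneOn measurableSet_Ioo monotoneOn_quantileFn

end Quantile

instance : IsProbabilityMeasure (volume.restrict (Ioo (0 : ℝ) 1)) :=
  ⟨by simp⟩

theorem volume_Ioo_inter_Ioc {a b : ℝ} (ha : 0 ≤ a) (hb : b ≤ 1) :
    volume (Ioo 0 1 ∩ Ioc a b) = ENNReal.ofReal (b - a) :=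
  le_antisymm ((measure_mono inter_subset_right).trans Real.volume_Ioc.le)
    (Real.volume_Ioo ▸ measure_mono fun _ hx =>
      ⟨⟨ha.trans_lt hx.1, hx.2.trans_le hb⟩, hx.1, hx.2.le⟩)

theorem map_quantileFn (μ : Measure ℝ) [IsProbabilityMeasure μ] :
    (volume.restrict (Ioo 0 1)).map (quantileFn μ) = μ := by
  refine Measure.ext_of_Iic _ _ fun x => ?_
  have hset : quantileFn μ ⁻¹' Iic x ∩ Ioo 0 1 = Ioo 0 1 ∩ Ioc 0 (cdf μ x) := by
    ext s
    by_cases hs : s ∈ Ioo (0 : ℝ) 1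
    · simp [hs, quantileFn_le_iff hs, hs.1]
    · simp [hs]
  rw [Measure.map_apply_of_aemeasurable aemeasurable_quantileFn measurableSet_Iic,
    Measure.restrict_apply' measurableSet_Ioo, hset,
    volume_Ioo_inter_Ioc le_rfl (cdf_le_one μ x), sub_zero, ofReal_cdf]

theorem volume_restrict_quantileFn_le_and_lt (ν ν' : Measure ℝ) [IsProbabilityMeasure ν]
    [IsProbabilityMeasure ν'] (a b : ℝ) :
    volume.restrict (Ioo 0 1) {s | quantileFn ν s ≤ a ∧ b < quantileFn ν' s}
      = ν (Iic a) - ν' (Iic b) := by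
  have hset : {s | quantileFn ν s ≤ a ∧ b < quantileFn ν' s} ∩ Ioo 0 1
      = Ioo 0 1 ∩ Ioc (cdf ν' b) (cdf ν a) := by
    ext s
    by_cases hs : s ∈ Ioo (0 : ℝ) 1
    · simp [hs, ← not_le, quantileFn_le_iff hs, and_comm]
    · simp [hs]
  rw [Measure.restrict_apply' measurableSet_Ioo, hset,
    volume_Ioo_inter_Ioc (cdf_nonneg ν' b) (cdf_le_one ν a),
    ENNReal.ofReal_sub _ (cdf_nonneg ν' b), ofReal_cdf, ofReal_cdf]

theorem measure_Iic_sub_measure_Iic_le {Ω : Type*} [MeasurableSpace Ω] {P : Measure Ω}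
    {X Y : Ω → ℝ} (hX : Measurable X) (hY : Measurable Y) {ν ν' : Measure ℝ}
    (hXν : P.map X = ν) (hYν' : P.map Y = ν') (a b : ℝ) :
    ν' (Iic a) - ν (Iic b) ≤ P {ω | Y ω ≤ a ∧ b < X ω} := by
  rw [← hXν, ← hYν', Measure.map_apply hY measurableSet_Iic,
    Measure.map_apply hX measurableSet_Iic]
  exact le_measure_sdiff.trans (measure_mono fun ω hω => ⟨hω.1, not_le.1 hω.2⟩)

theorem lintegral_volume_Ico {α : Type*} [MeasurableSpace α] (ρ : Measure α) [SFinite ρ]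
    {f g : α → ℝ} (hf : Measurable f) (hg : Measurable g) :
    ∫⁻ x, volume (Ico (f x) (g x)) ∂ρ = ∫⁻ t, ρ {x | f x ≤ t ∧ t < g x} := by
  have hS : MeasurableSet {q : α × ℝ | f q.1 ≤ q.2 ∧ q.2 < g q.1} :=
    (measurableSet_le (hf.comp measurable_fst) measurable_snd).inter
      (measurableSet_lt measurable_snd (hg.comp measurable_fst))
  exact (Measure.prod_apply hS).symm.trans (Measure.prod_apply_symm hS)

theorem ofReal_abs_sub_sub (x y : ℝ) {r : ℝ} (hr : 0 ≤ r) :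
    ENNReal.ofReal (|x - y| - r) = volume (Ico y (x - r)) + volume (Ico x (y - r)) := by
  rw [Real.volume_Ico, Real.volume_Ico]
  rcases le_total x y with h | h
  · rw [abs_of_nonpos (sub_nonpos.2 h), ENNReal.ofReal_of_nonpos (by linarith : x - r - y ≤ 0),
      zero_add]
    ring_nf
  · rw [abs_of_nonneg (sub_nonneg.2 h), ENNReal.ofReal_of_nonpos (by linarith : y - r - x ≤ 0),
      add_zero]
    ring_nf

theorem lintegral_ofReal_abs_sub_sub (ρ : Measure (ℝ × ℝ)) [SFinite ρ] {r : ℝ} (hr : 0 ≤ r) :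
    ∫⁻ z, ENNReal.ofReal (|z.1 - z.2| - r) ∂ρ
      = (∫⁻ t, ρ {z | z.2 ≤ t ∧ t + r < z.1}) + ∫⁻ t, ρ {z | z.1 ≤ t ∧ t + r < z.2} := by
  simp_rw [ofReal_abs_sub_sub _ _ hr]
  rw [lintegral_add_left (by simp only [Real.volume_Ico]; fun_prop),
    lintegral_volume_Ico ρ measurable_snd (by fun_prop),
    lintegral_volume_Ico ρ measurable_fst (by fun_prop)]
  simp only [lt_sub_iff_add_lt]

noncomputable def quantileCoupling (μ₁ μ₂ : Measure ℝ) : Measure (ℝ × ℝ) :=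
  (volume.restrict (Ioo 0 1)).map fun s => (quantileFn μ₁ s, quantileFn μ₂ s)

section QuantileCoupling

variable {μ₁ μ₂ : Measure ℝ} [IsProbabilityMeasure μ₁] [IsProbabilityMeasure μ₂]

theorem aemeasurable_quantileFn_prod :
    AEMeasurable (fun s => (quantileFn μ₁ s, quantileFn μ₂ s)) (volume.restrict (Ioo 0 1)) :=
  aemeasurable_quantileFn.prodMk aemeasurable_quantileFn

instance : IsProbabilityMeasure (quantileCoupling μ₁ μ₂) :=
  Measure.isProbabilityMeasure_map aemeasurable_quantileFn_prod

theorem quantileCoupling_map_fst : (quantileCoupling μ₁ μ₂).map Prod.fst = μ₁ := by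
  rw [quantileCoupling, AEMeasurable.map_map_of_aemeasurable measurable_fst.aemeasurable
    aemeasurable_quantileFn_prod]
  exact map_quantileFn μ₁

theorem quantileCoupling_map_snd : (quantileCoupling μ₁ μ₂).map Prod.snd = μ₂ := by
  rw [quantileCoupling, AEMeasurable.map_map_of_aemeasurable measurable_snd.aemeasurable
    aemeasurable_quantileFn_prod]
  exact map_quantileFn μ₂

theorem quantileCoupling_apply {S : Set (ℝ × ℝ)} (hS : MeasurableSet S) :
    quantileCoupling μ₁ μ₂ S
      = volume.restrict (Ioo 0 1) {s | (quantileFn μ₁ s, quantileFn μ₂ s) ∈ S} :=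
  Measure.map_apply_of_aemeasurable aemeasurable_quantileFn_prod hS

theorem lintegral_hinge_quantileCoupling_le {π : Measure (ℝ × ℝ)} [SFinite π]
    (h₁ : π.map Prod.fst = μ₁) (h₂ : π.map Prod.snd = μ₂) {r : ℝ} (hr : 0 ≤ r) :
    ∫⁻ z, ENNReal.ofReal (|z.1 - z.2| - r) ∂quantileCoupling μ₁ μ₂
      ≤ ∫⁻ z, ENNReal.ofReal (|z.1 - z.2| - r) ∂π := by
  rw [lintegral_ofReal_abs_sub_sub _ hr, lintegral_ofReal_abs_sub_sub _ hr]
  refine add_le_add (lintegral_mono fun t => ?_) (lintegral_mono fun t => ?_)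
  · rw [quantileCoupling_apply (by measurability)]
    exact (volume_restrict_quantileFn_le_and_lt μ₂ μ₁ t (t + r)).trans_le
      (measure_Iic_sub_measure_Iic_le measurable_fst measurable_snd h₁ h₂ t (t + r))
  · rw [quantileCoupling_apply (by measurability)]
    exact (volume_restrict_quantileFn_le_and_lt μ₁ μ₂ t (t + r)).trans_le
      (measure_Iic_sub_measure_Iic_le measurable_snd measurable_fst h₂ h₁ t (t + r))

end QuantileCoupling

section Hinge

variable {p : ℝ}

theorem integral_hinge_rpow (hp : 1 < p) {a : ℝ} (ha : 0 ≤ a) :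
    ∫ r in (0 : ℝ)..a, p * (p - 1) * r ^ (p - 2) * (a - r) = a ^ p := by
  have hsplit : ∀ r ∈ uIcc 0 a,
      p * (p - 1) * r ^ (p - 2) * (a - r)
        = p * (p - 1) * a * r ^ (p - 2) - p * r ^ (p - 1) * (p - 1) := by
    intro r hr
    rw [uIcc_of_le ha] at hr
    rw [show p - 1 = p - 2 + 1 by ring, Real.rpow_add_one' hr.1 (by linarith)]
    ring
  have hapow : a ^ p = a ^ (p - 1) * a := by
    rw [← Real.rpow_add_one' ha (by linarith), sub_add_cancel]
  rw [intervalIntegral.integral_congr hsplit, intervalIntegral.integral_sub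
      ((intervalIntegral.intervalIntegrable_rpow' (by linarith)).const_mul _)
      (((intervalIntegral.intervalIntegrable_rpow' (by linarith)).const_mul _).mul_const _),
    intervalIntegral.integral_const_mul, intervalIntegral.integral_mul_const,
    intervalIntegral.integral_const_mul, integral_rpow (Or.inl (by linarith)),
    integral_rpow (Or.inl (by linarith))]
  rw [show p - 2 + 1 = p - 1 by ring, sub_add_cancel, Real.zero_rpow (by linarith),
    Real.zero_rpow (by linarith), hapow]
  have hp₁ : p - 1 ≠ 0 := by linarith
  have hp₀ : p ≠ 0 := by linarith
  field_simp
  ring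

theorem lintegral_hinge_rpow (hp : 1 < p) {a : ℝ} (ha : 0 ≤ a) :
    ∫⁻ r in Ioi 0, ENNReal.ofReal (p * (p - 1) * r ^ (p - 2)) * ENNReal.ofReal (a - r)
      = ENNReal.ofReal (a ^ p) := by
  have hk : ∀ r : ℝ, 0 ≤ r → 0 ≤ p * (p - 1) * r ^ (p - 2) := fun r hr =>
    mul_nonneg (mul_nonneg (by linarith) (by linarith)) (Real.rpow_nonneg hr _)
  have hint : IntegrableOn (fun r => p * (p - 1) * r ^ (p - 2) * (a - r)) (Ioc 0 a) :=
    (intervalIntegrable_iff_integrableOn_Ioc_of_le ha).1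
      (((intervalIntegral.intervalIntegrable_rpow' (by linarith)).const_mul _).mul_continuousOn
        (by fun_prop))
  rw [← Ioc_union_Ioi_eq_Ioi ha, lintegral_union measurableSet_Ioi (Ioc_disjoint_Ioi le_rfl),
    setLIntegral_congr_fun measurableSet_Ioi fun r (hr : a < r) => by
      rw [ENNReal.ofReal_of_nonpos (sub_nonpos.2 hr.le), mul_zero],
    lintegral_zero, add_zero,
    setLIntegral_congr_fun measurableSet_Ioc fun r hr => (ENNReal.ofReal_mul (hk r hr.1.le)).symm,
    ← ofReal_integral_eq_lintegral_ofReal hint (ae_restrict_of_forall_mem measurableSet_Ioc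
      fun r hr => mul_nonneg (hk r hr.1.le) (sub_nonneg.2 hr.2)),
    ← intervalIntegral.integral_of_le ha, integral_hinge_rpow hp ha]

variable {α : Type*} [MeasurableSpace α] {f : α → ℝ}

theorem lintegral_rpow_eq_lintegral_hinge (ρ : Measure α) [SFinite ρ] (hf : Measurable f)
    (hp : 1 < p) :
    ∫⁻ x, ENNReal.ofReal (|f x| ^ p) ∂ρ
      = ∫⁻ r in Ioi 0, ENNReal.ofReal (p * (p - 1) * r ^ (p - 2))
          * ∫⁻ x, ENNReal.ofReal (|f x| - r) ∂ρ := by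
  simp_rw [← lintegral_hinge_rpow hp (abs_nonneg (f _))]
  rw [lintegral_lintegral_swap (by fun_prop)]
  exact lintegral_congr fun r => lintegral_const_mul' _ _ ENNReal.ofReal_ne_top

theorem lintegral_rpow_le_of_forall_lintegral_hinge_le {ρ ρ' : Measure α} [SFinite ρ]
    [SFinite ρ'] (hf : Measurable f) (hp : 1 ≤ p)
    (h : ∀ r, 0 ≤ r → ∫⁻ x, ENNReal.ofReal (|f x| - r) ∂ρ ≤ ∫⁻ x, ENNReal.ofReal (|f x| - r) ∂ρ') :
    ∫⁻ x, ENNReal.ofReal (|f x| ^ p) ∂ρ ≤ ∫⁻ x, ENNReal.ofReal (|f x| ^ p) ∂ρ' := by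
  rcases hp.eq_or_lt with rfl | hp
  · simpa using h 0 le_rfl
  rw [lintegral_rpow_eq_lintegral_hinge ρ hf hp, lintegral_rpow_eq_lintegral_hinge ρ' hf hp]
  exact setLIntegral_mono' measurableSet_Ioi fun r hr => mul_le_mul_right (h r (le_of_lt hr)) _

end Hinge

theorem memLp_of_map {Ω : Type*} [MeasurableSpace Ω] {P : Measure Ω} {X : Ω → ℝ}
    (hX : Measurable X) {ν : Measure ℝ} (hXν : P.map X = ν) {p : ℝ} (hp : 0 < p)
    (hν : Integrable (fun x => |x| ^ p) ν) : MemLp X (ENNReal.ofReal p) P := by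
  rw [← integrable_norm_rpow_iff hX.aestronglyMeasurable (by simpa using hp) ofReal_ne_top,
    ENNReal.toReal_ofReal hp.le]
  exact (integrable_map_measure (by fun_prop : Measurable fun x : ℝ => |x| ^ p).aestronglyMeasurable
    hX.aemeasurable).1 (hXν ▸ hν)

theorem integrable_abs_sub_rpow_of_map {π : Measure (ℝ × ℝ)} {μ₁ μ₂ : Measure ℝ} {p : ℝ}
    (hp : 0 < p) (hm₁ : Integrable (fun x => |x| ^ p) μ₁) (hm₂ : Integrable (fun x => |x| ^ p) μ₂)
    (h₁ : π.map Prod.fst = μ₁) (h₂ : π.map Prod.snd = μ₂) :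
    Integrable (fun z => |z.1 - z.2| ^ p) π := by
  simpa [ENNReal.toReal_ofReal hp.le] using
    ((memLp_of_map measurable_fst h₁ hp hm₁).sub (memLp_of_map measurable_snd h₂ hp hm₂)
      ).integrable_norm_rpow (by simpa using hp) ofReal_ne_top

theorem integral_quantileCoupling_le {μ₁ μ₂ : Measure ℝ} [IsProbabilityMeasure μ₁]
    [IsProbabilityMeasure μ₂] {π : Measure (ℝ × ℝ)} [SFinite π] {p : ℝ} (hp : 1 ≤ p)
    (h₁ : π.map Prod.fst = μ₁) (h₂ : π.map Prod.snd = μ₂)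
    (hπ : Integrable (fun z => |z.1 - z.2| ^ p) π) :
    ∫ z, |z.1 - z.2| ^ p ∂quantileCoupling μ₁ μ₂ ≤ ∫ z, |z.1 - z.2| ^ p ∂π := by
  have hnonneg : 0 ≤ fun z : ℝ × ℝ => |z.1 - z.2| ^ p := fun z => by positivity
  have hmeas : Measurable fun z : ℝ × ℝ => |z.1 - z.2| ^ p := by fun_prop
  rw [integral_eq_lintegral_of_nonneg_ae (.of_forall hnonneg) hmeas.aestronglyMeasurable,
    integral_eq_lintegral_of_nonneg_ae (.of_forall hnonneg) hmeas.aestronglyMeasurable]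
  exact ENNReal.toReal_mono hπ.lintegral_lt_top.ne
    (lintegral_rpow_le_of_forall_lintegral_hinge_le (by fun_prop) hp fun _ hr =>
      lintegral_hinge_quantileCoupling_le h₁ h₂ hr)

/-- For probability measures on ℝ with finite p-th moments, the p-Wasserstein cost equals
the L^p distance between the quantile functions:
`W_p^p(μ₁,μ₂) = ∫₀¹ |F₁⁻¹(s) - F₂⁻¹(s)|^p ds`. -/
theorem wasserstein_eq_quantile_integral (p : ℝ) (hp : 1 ≤ p)
    (μ₁ μ₂ : Measure ℝ) [IsProbabilityMeasure μ₁] [IsProbabilityMeasure μ₂]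
    (hm₁ : Integrable (fun x => |x| ^ p) μ₁)
    (hm₂ : Integrable (fun x => |x| ^ p) μ₂) :
    WassersteinP p μ₁ μ₂ =
      ∫ s in Ioo (0 : ℝ) 1, |quantileFn μ₁ s - quantileFn μ₂ s| ^ p := by
  have hcost : ∫ z, |z.1 - z.2| ^ p ∂quantileCoupling μ₁ μ₂
      = ∫ s in Ioo (0 : ℝ) 1, |quantileFn μ₁ s - quantileFn μ₂ s| ^ p :=
    integral_map aemeasurable_quantileFn_prod
      (by fun_prop : Measurable fun z : ℝ × ℝ => |z.1 - z.2| ^ p).aestronglyMeasurable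
  refine IsLeast.csInf_eq ⟨⟨quantileCoupling μ₁ μ₂, inferInstance, quantileCoupling_map_fst,
    quantileCoupling_map_snd, hcost.symm⟩, ?_⟩
  rintro _ ⟨π, _, h₁, h₂, rfl⟩
  exact hcost ▸ integral_quantileCoupling_le hp h₁ h₂
    (integrable_abs_sub_rpow_of_map (by linarith) hm₁ hm₂ h₁ h₂)
end

section
/- For any two probability measures μ, ν on a compact set M ⊂ ℝ^d, the squared 2-Wasserstein distance satisfies W₂²(μ,ν) ≤ d_TV(μ,ν)² + diam(M)·d_TV(μ,ν), where d_TV is the total variation distance and diam(M) is the (squared) diameter of M. -/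
open MeasureTheory Set

/-- Squared 2-Wasserstein distance via couplings. -/
noncomputable def W2sq {d : ℕ} (μ ν : Measure (EuclideanSpace ℝ (Fin d))) : ℝ :=
  sInf {c : ℝ | ∃ π : Measure (EuclideanSpace ℝ (Fin d) × EuclideanSpace ℝ (Fin d)),
    IsProbabilityMeasure π ∧ π.map Prod.fst = μ ∧ π.map Prod.snd = ν ∧
    c = ∫ x, ‖x.1 - x.2‖ ^ 2 ∂π}

/-- Total variation distance between measures. -/
noncomputable def dTV {d : ℕ} (μ ν : Measure (EuclideanSpace ℝ (Fin d))) : ℝ :=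
  sSup {r : ℝ | ∃ B : Set (EuclideanSpace ℝ (Fin d)), MeasurableSet B ∧
    r = |(μ B).toReal - (ν B).toReal|}

open scoped ENNReal

/-!
Couple `μ` and `ν` maximally: their common part `μ ⊓ ν` stays on the diagonal at no cost, and
only the excess `μ - ν` is moved, coupled independently with `ν - μ`. The excess has mass
`d_TV(μ, ν)`, attained on a Hahn set of `μ - ν`, and each unit of it pays at most `diam(M)`,
so in fact `W₂²(μ, ν) ≤ diam(M) · d_TV(μ, ν)`.
-/

namespace MeasureTheory

open MeasureTheory.Measure

variable {α : Type*} [MeasurableSpace α] {μ ν : Measure α} {s : Set α}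

theorem IsHahnDecomposition.restrict_add_restrict_compl_add_sub [IsFiniteMeasure ν]
    (hs : IsHahnDecomposition μ ν s) : μ.restrict s + ν.restrict sᶜ + (μ - ν) = μ := by
  have hsub : μ - ν = μ.restrict sᶜ - ν.restrict sᶜ := by
    rw [← restrict_sub_eq_restrict_sub_restrict hs.measurableSet.compl,
      restrict_eq_self_of_ae_mem (s := sᶜ)
        (compl_mem_ae_iff.mpr (sub_apply_eq_zero_of_isHahnDecomposition hs))]
  rw [hsub, add_assoc, add_comm (ν.restrict sᶜ), sub_add_cancel_of_le hs.ge_on_compl,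
    restrict_add_restrict_compl hs.measurableSet]

theorem IsHahnDecomposition.add_sub_apply_univ [IsFiniteMeasure μ]
    (hs : IsHahnDecomposition μ ν s) : μ s + (ν - μ) univ = ν s := by
  have hnull : (ν - μ) sᶜ = 0 := sub_apply_eq_zero_of_isHahnDecomposition hs.compl
  have hsupp : (ν - μ).restrict s = ν - μ :=
    restrict_eq_self_of_ae_mem (by simpa using compl_mem_ae_iff.mpr hnull)
  rw [← hsupp, restrict_sub_eq_restrict_sub_restrict hs.measurableSet,
    sub_apply MeasurableSet.univ hs.le_on, restrict_apply_univ, restrict_apply_univ,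
    add_tsub_cancel_of_le]
  simpa using hs.le_on univ

namespace Measure

theorem sub_sub_self_add_sub [IsFiniteMeasure μ] : μ - (μ - ν) + (μ - ν) = μ :=
  sub_add_cancel_of_le sub_le

variable [IsFiniteMeasure μ] [IsFiniteMeasure ν]

theorem sub_sub_self_comm : μ - (μ - ν) = ν - (ν - μ) := by
  obtain ⟨s, hs⟩ := exists_isHahnDecomposition μ ν
  have hμ := hs.restrict_add_restrict_compl_add_sub
  have hν := hs.compl.restrict_add_restrict_compl_add_sub
  rw [compl_compl, add_comm (ν.restrict sᶜ)] at hν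
  calc μ - (μ - ν) = μ.restrict s + ν.restrict sᶜ := by
        rw [← Measure.add_sub_cancel (μ := μ.restrict s + ν.restrict sᶜ) (ν := μ - ν), hμ]
    _ = ν - (ν - μ) := by
        rw [← Measure.add_sub_cancel (μ := μ.restrict s + ν.restrict sᶜ) (ν := ν - μ), hν]

theorem sub_sub_self_add_sub_swap : μ - (μ - ν) + (ν - μ) = ν := by
  rw [sub_sub_self_comm, sub_sub_self_add_sub]

theorem sub_apply_univ_comm (h : μ univ = ν univ) : (μ - ν) univ = (ν - μ) univ := by
  have hμ := congrArg (· univ) (sub_sub_self_add_sub (μ := μ) (ν := ν))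
  have hν := congrArg (· univ) (sub_sub_self_add_sub_swap (μ := μ) (ν := ν))
  simp only [add_apply] at hμ hν
  exact (ENNReal.add_right_inj (measure_ne_top _ _)).mp (hμ.trans (h.trans hν.symm))

theorem inv_smul_smul_measure_univ (ρ : Measure α) [IsFiniteMeasure ρ] :
    (ρ univ)⁻¹ • ρ univ • ρ = ρ := by
  rcases eq_or_ne (ρ univ) 0 with h | h
  · simp [measure_univ_eq_zero.mp h]
  · rw [smul_smul, ENNReal.inv_mul_cancel h (measure_ne_top ρ univ), one_smul]

end Measure

/-- `μ - (μ - ν)` is the common part `μ ⊓ ν`; the factor renormalizes the product of the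
excesses when `μ - ν` and `ν - μ` have the same mass. -/
noncomputable def maximalCoupling (μ ν : Measure α) : Measure (α × α) :=
  (μ - (μ - ν)).map Function.diag + ((μ - ν) univ)⁻¹ • (μ - ν).prod (ν - μ)

section maximalCoupling

variable [IsFiniteMeasure μ] [IsFiniteMeasure ν]

theorem map_fst_maximalCoupling (h : μ univ = ν univ) :
    (maximalCoupling μ ν).map Prod.fst = μ := by
  rw [maximalCoupling, Measure.map_add _ _ measurable_fst, map_map measurable_fst measurable_diag,
    Function.fst_comp_diag, map_id, Measure.map_smul, map_fst_prod,
    ← sub_apply_univ_comm h, inv_smul_smul_measure_univ]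
  exact sub_sub_self_add_sub

theorem map_snd_maximalCoupling (h : μ univ = ν univ) :
    (maximalCoupling μ ν).map Prod.snd = ν := by
  rw [maximalCoupling, Measure.map_add _ _ measurable_snd, map_map measurable_snd measurable_diag,
    Function.snd_comp_diag, map_id, Measure.map_smul, map_snd_prod,
    sub_apply_univ_comm h, inv_smul_smul_measure_univ]
  exact sub_sub_self_add_sub_swap

theorem lintegral_maximalCoupling_le (h : μ univ = ν univ) {c : α × α → ℝ≥0∞} {D : ℝ≥0∞}
    (hdiag : ∀ x, c (x, x) = 0) (hc : ∀ᵐ p ∂μ.prod ν, c p ≤ D) :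
    ∫⁻ p, c p ∂maximalCoupling μ ν ≤ D * (μ - ν) univ := by
  set t := (μ - ν) univ
  have hoverlap : ∫⁻ p, c p ∂(μ - (μ - ν)).map Function.diag = 0 :=
    le_antisymm ((lintegral_map_le _ _).trans_eq (by simp [hdiag])) zero_le
  have hexcess : ∫⁻ p, c p ∂(μ - ν).prod (ν - μ) ≤ D * (t * t) :=
    calc ∫⁻ p, c p ∂(μ - ν).prod (ν - μ) ≤ ∫⁻ _, D ∂(μ - ν).prod (ν - μ) :=
          lintegral_mono_ae (ae_mono (prod_mono sub_le sub_le) hc)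
      _ = D * (t * t) := by
          rw [lintegral_const, ← univ_prod_univ, prod_prod, ← sub_apply_univ_comm h]
  rw [maximalCoupling, lintegral_add_measure, lintegral_smul_measure, hoverlap, zero_add,
    smul_eq_mul]
  calc t⁻¹ * ∫⁻ p, c p ∂(μ - ν).prod (ν - μ) ≤ t⁻¹ * (D * (t * t)) := by gcongr
    _ = D * t * (t⁻¹ * t) := by ring
    _ ≤ D * t := mul_le_of_le_one_right' (ENNReal.inv_mul_le_one t)

theorem integral_maximalCoupling_le (h : μ univ = ν univ) {c : α × α → ℝ} {D : ℝ} (hD : 0 ≤ D)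
    (hc0 : ∀ p, 0 ≤ c p) (hcm : AEStronglyMeasurable c (maximalCoupling μ ν))
    (hdiag : ∀ x, c (x, x) = 0) (hc : ∀ᵐ p ∂μ.prod ν, c p ≤ D) :
    ∫ p, c p ∂maximalCoupling μ ν ≤ D * ((μ - ν) univ).toReal := by
  have hlin := lintegral_maximalCoupling_le h (c := fun p ↦ ENNReal.ofReal (c p))
    (by simp [hdiag]) (hc.mono fun _ hp ↦ ENNReal.ofReal_le_ofReal hp)
  rw [integral_eq_lintegral_of_nonneg_ae (.of_forall hc0) hcm]
  calc _ ≤ (ENNReal.ofReal D * (μ - ν) univ).toReal :=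
        ENNReal.toReal_mono (by finiteness) hlin
    _ = D * ((μ - ν) univ).toReal := by rw [ENNReal.toReal_mul, ENNReal.toReal_ofReal hD]

end maximalCoupling

end MeasureTheory

theorem norm_sub_sq_le_sSup {E : Type*} [SeminormedAddCommGroup E] {M : Set E}
    (hM : Bornology.IsBounded M) {x y : E} (hx : x ∈ M) (hy : y ∈ M) :
    ‖x - y‖ ^ 2 ≤ sSup {r : ℝ | ∃ x ∈ M, ∃ y ∈ M, r = ‖x - y‖ ^ 2} := by
  refine le_csSup ⟨Metric.diam M ^ 2, ?_⟩ ⟨x, hx, y, hy, rfl⟩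
  rintro _ ⟨x, hx, y, hy, rfl⟩
  rw [← dist_eq_norm]
  gcongr
  exact Metric.dist_le_diam_of_mem hM hx hy

section EuclideanSpace

variable {d : ℕ} {μ ν : Measure (EuclideanSpace ℝ (Fin d))}

theorem W2sq_le_integral [IsProbabilityMeasure μ]
    (π : Measure (EuclideanSpace ℝ (Fin d) × EuclideanSpace ℝ (Fin d)))
    (hfst : π.map Prod.fst = μ) (hsnd : π.map Prod.snd = ν) :
    W2sq μ ν ≤ ∫ p, ‖p.1 - p.2‖ ^ 2 ∂π := by
  have : IsProbabilityMeasure (π.map Prod.fst) := hfst ▸ ‹_›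
  have : IsProbabilityMeasure π := Measure.isProbabilityMeasure_of_map Prod.fst
  refine csInf_le ⟨0, ?_⟩ ⟨π, this, hfst, hsnd, rfl⟩
  rintro _ ⟨π', -, -, -, rfl⟩
  exact integral_nonneg fun _ ↦ by positivity

variable [IsFiniteMeasure μ] [IsFiniteMeasure ν]

theorem abs_sub_le_dTV {B : Set (EuclideanSpace ℝ (Fin d))} (hB : MeasurableSet B) :
    |(μ B).toReal - (ν B).toReal| ≤ dTV μ ν := by
  refine le_csSup ⟨(μ univ).toReal + (ν univ).toReal, ?_⟩ ⟨B, hB, rfl⟩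
  rintro _ ⟨C, -, rfl⟩
  refine (abs_sub _ _).trans ?_
  rw [abs_of_nonneg ENNReal.toReal_nonneg, abs_of_nonneg ENNReal.toReal_nonneg]
  gcongr <;> simp

theorem toReal_sub_apply_univ_le_dTV : ((ν - μ) univ).toReal ≤ dTV μ ν := by
  obtain ⟨s, hs⟩ := exists_isHahnDecomposition μ ν
  refine le_of_eq_of_le ?_ (abs_sub_le_dTV hs.measurableSet)
  rw [← hs.add_sub_apply_univ, ENNReal.toReal_add (measure_ne_top _ _) (measure_ne_top _ _),
    abs_sub_comm, add_sub_cancel_left, abs_of_nonneg ENNReal.toReal_nonneg]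

end EuclideanSpace

/-- For probability measures supported on a compact set `M`, writing `diam` for the
supremum of squared distances in `M`, the squared 2-Wasserstein distance satisfies
`W₂²(μ,ν) ≤ d_TV(μ,ν)² + diam(M)·d_TV(μ,ν)`. -/
theorem W2sq_le_dTV {d : ℕ} (M : Set (EuclideanSpace ℝ (Fin d))) (hM : IsCompact M)
    (μ ν : Measure (EuclideanSpace ℝ (Fin d)))
    [IsProbabilityMeasure μ] [IsProbabilityMeasure ν]
    (hμ : μ Mᶜ = 0) (hν : ν Mᶜ = 0) :
    W2sq μ ν ≤ dTV μ ν ^ 2 +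
      (sSup {r : ℝ | ∃ x ∈ M, ∃ y ∈ M, r = ‖x - y‖ ^ 2}) * dTV μ ν := by
  set D := sSup {r : ℝ | ∃ x ∈ M, ∃ y ∈ M, r = ‖x - y‖ ^ 2}
  have hmass : μ univ = ν univ := by simp
  obtain ⟨x₀, hx₀⟩ : M.Nonempty := nonempty_iff_ne_empty.mpr fun hM₀ ↦ by simp [hM₀] at hμ
  have hD : 0 ≤ D := (sq_nonneg _).trans (norm_sub_sq_le_sSup hM.isBounded hx₀ hx₀)
  have hcost : ∀ᵐ p ∂μ.prod ν, ‖p.1 - p.2‖ ^ 2 ≤ D := by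
    filter_upwards [Measure.quasiMeasurePreserving_fst.ae (mem_ae_iff.mpr hμ),
      Measure.quasiMeasurePreserving_snd.ae (mem_ae_iff.mpr hν)] with p hp₁ hp₂
    exact norm_sub_sq_le_sSup hM.isBounded hp₁ hp₂
  calc W2sq μ ν ≤ ∫ p, ‖p.1 - p.2‖ ^ 2 ∂maximalCoupling μ ν :=
        W2sq_le_integral _ (map_fst_maximalCoupling hmass) (map_snd_maximalCoupling hmass)
    _ ≤ D * ((μ - ν) univ).toReal :=
        integral_maximalCoupling_le hmass hD (fun _ ↦ by positivity)
          (by fun_prop) (by simp) hcost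
    _ ≤ D * dTV μ ν := by
        rw [Measure.sub_apply_univ_comm hmass]
        gcongr
        exact toReal_sub_apply_univ_le_dTV
    _ ≤ dTV μ ν ^ 2 + D * dTV μ ν := le_add_of_nonneg_left (sq_nonneg _)
end

section
/- Let ν be an absolutely continuous probability measure on a compact set M ⊂ ℝ^d whose density f is Lipschitz continuous. Let (d₁,…,d_m) be an equidistant rectangular grid on M with mesh ζ = min_{k≠l} ‖d_k − d_l‖, and let ν_r be the discrete measure placing mass r_k ∝ f(d_k) at d_k. Then W₂²(ν, ν_r) = O(ζ) as ζ → 0 (in particular W₂²(ν,ν_r) → 0). -/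
open MeasureTheory Set
open scoped ENNReal NNReal

/-- The half-open grid cell (rectangular bin) with lower vertex `v` and spacing `h`. -/
def gridCell {d : ℕ} (v : EuclideanSpace ℝ (Fin d)) (h : ℝ) :
    Set (EuclideanSpace ℝ (Fin d)) :=
  {x | ∀ i, v i ≤ x i ∧ x i < v i + h}

/-!
Send each grid cell `C_k` to its vertex `d_k`, but only as much of its mass as the target
weight `r_k` allows; this part costs at most `d ζ²`. Since the density is `L`-Lipschitz,
`ν(C_k)` differs from `f(d_k) ζ^d` by at most `L √d ζ · ζ^d`, and normalizing the weights
`f(d_k) ζ^d` into `r_k` at most doubles the total error, so the unmatched mass is `O(ζ)`.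
It is coupled arbitrarily inside `M`, at cost at most `diam(M)²` per unit of mass.
For `ζ > 1` the trivial bound `W₂² ≤ diam(M)²` is already `O(ζ)`.
-/

open Function

theorem min_one_div_mul_add_tsub {p r : ℝ≥0∞} (hp : p ≠ ∞) :
    min 1 (r / p) * p + (r - p) = r := by
  rcases eq_or_ne p 0 with rfl | hp0
  · simp
  rcases le_total r p with hrp | hpr
  · rw [min_eq_right ((ENNReal.div_le_iff hp0 hp).2 (by simpa using hrp)),
      ENNReal.div_mul_cancel hp0 hp, tsub_eq_zero_of_le hrp, add_zero]
  · rw [min_eq_left ((ENNReal.le_div_iff_mul_le (.inl hp0) (.inl hp)).2 (by simpa using hpr)),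
      one_mul, add_tsub_cancel_of_le hpr]

theorem sum_abs_div_sum_sub_le {ι : Type*} [Fintype ι] {p q : ι → ℝ} (hp : ∑ i, p i = 1)
    (hq : ∀ i, 0 ≤ q i) (hQ : 0 < ∑ i, q i) :
    ∑ i, |q i / ∑ j, q j - p i| ≤ 2 * ∑ i, |q i - p i| := by
  set Q := ∑ j, q j
  have hrescale : ∑ i, |q i / Q - q i| = |1 - Q| := by
    have h : ∀ i, |q i / Q - q i| = q i * |1 / Q - 1| := fun i => by
      rw [show q i / Q - q i = q i * (1 / Q - 1) by ring, abs_mul, abs_of_nonneg (hq i)]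
    rw [Finset.sum_congr rfl fun i _ => h i, ← Finset.sum_mul]
    calc Q * |1 / Q - 1| = |Q * (1 / Q - 1)| := by rw [abs_mul, abs_of_pos hQ]
      _ = |1 - Q| := by rw [mul_sub, mul_one_div_cancel hQ.ne', mul_one]
  have hmass : |1 - Q| ≤ ∑ i, |q i - p i| := by
    rw [← hp, ← Finset.sum_sub_distrib]
    exact (Finset.abs_sum_le_sum_abs _ _).trans_eq
      (Finset.sum_congr rfl fun i _ => abs_sub_comm _ _)
  calc ∑ i, |q i / Q - p i| ≤ ∑ i, (|q i / Q - q i| + |q i - p i|) :=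
        Finset.sum_le_sum fun i _ => abs_sub_le _ _ _
    _ ≤ 2 * ∑ i, |q i - p i| := by rw [Finset.sum_add_distrib, hrescale]; linarith

theorem sum_ofReal_div_sum_eq_one {ι : Type*} [Fintype ι] {w : ι → ℝ} (hw : ∀ i, 0 ≤ w i)
    (hW : 0 < ∑ i, w i) : ∑ i, ENNReal.ofReal (w i / ∑ j, w j) = 1 := by
  rw [← ENNReal.ofReal_sum_of_nonneg fun i _ => div_nonneg (hw i) hW.le, ← Finset.sum_div,
    div_self hW.ne', ENNReal.ofReal_one]

theorem toReal_sum_ofReal_tsub_le {ι : Type*} [Fintype ι] (a : ι → ℝ) {b : ι → ℝ≥0∞}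
    (hb : ∀ i, b i ≠ ∞) :
    (∑ i, (ENNReal.ofReal (a i) - b i)).toReal ≤ ∑ i, |a i - (b i).toReal| := by
  refine ENNReal.toReal_le_of_le_ofReal (by positivity) ?_
  rw [ENNReal.ofReal_sum_of_nonneg fun i _ => abs_nonneg _]
  gcongr with i
  calc ENNReal.ofReal (a i) - b i = ENNReal.ofReal (a i - (b i).toReal) := by
        rw [ENNReal.ofReal_sub _ ENNReal.toReal_nonneg, ENNReal.ofReal_toReal (hb i)]
    _ ≤ ENNReal.ofReal |a i - (b i).toReal| := ENNReal.ofReal_le_ofReal (le_abs_self _)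

theorem abs_toReal_withDensity_sub_le {α : Type*} [MeasurableSpace α] {μ : Measure α}
    {f : α → ℝ} {s : Set α} (hs : MeasurableSet s) (hμs : μ s ≠ ∞) {c ε : ℝ} (hc : 0 ≤ c)
    (hε : 0 ≤ ε) (hf : ∀ x ∈ s, |f x - c| ≤ ε) :
    |((μ.withDensity fun x => ENNReal.ofReal (f x)) s).toReal - c * (μ s).toReal|
      ≤ ε * (μ s).toReal := by
  rw [withDensity_apply _ hs]
  have hup : ∫⁻ x in s, ENNReal.ofReal (f x) ∂μ ≤ ENNReal.ofReal (c + ε) * μ s :=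
    (setLIntegral_mono' hs fun x hx => ENNReal.ofReal_le_ofReal
      (by linarith [(abs_le.1 (hf x hx)).2])).trans_eq (setLIntegral_const _ _)
  have hlow : ENNReal.ofReal (c - ε) * μ s ≤ ∫⁻ x in s, ENNReal.ofReal (f x) ∂μ :=
    (setLIntegral_const _ _).symm.trans_le (setLIntegral_mono' hs fun x hx =>
      ENNReal.ofReal_le_ofReal (by linarith [(abs_le.1 (hf x hx)).1]))
  have hup_fin : ENNReal.ofReal (c + ε) * μ s ≠ ∞ := ENNReal.mul_ne_top ENNReal.ofReal_ne_top hμs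
  have hup' := ENNReal.toReal_mono hup_fin hup
  have hlow' := ENNReal.toReal_mono (ne_top_of_le_ne_top hup_fin hup) hlow
  rw [ENNReal.toReal_mul, ENNReal.toReal_ofReal (by linarith)] at hup'
  rw [ENNReal.toReal_mul, ENNReal.toReal_ofReal'] at hlow'
  have hμ0 : 0 ≤ (μ s).toReal := ENNReal.toReal_nonneg
  rw [abs_le]
  constructor <;> nlinarith [le_max_left (c - ε) 0]

section Coupling

variable {d : ℕ}

theorem W2sq_le_of_coupling {μ ν : Measure (EuclideanSpace ℝ (Fin d))}
    (π : Measure (EuclideanSpace ℝ (Fin d) × EuclideanSpace ℝ (Fin d)))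
    [IsProbabilityMeasure π] (h₁ : π.map Prod.fst = μ) (h₂ : π.map Prod.snd = ν)
    {c : ℝ} (hc : 0 ≤ c)
    (hcost : ∫⁻ z, ENNReal.ofReal (‖z.1 - z.2‖ ^ 2) ∂π ≤ ENNReal.ofReal c) :
    W2sq μ ν ≤ c := by
  have hcost' : ∫ z, ‖z.1 - z.2‖ ^ 2 ∂π ≤ c := by
    rw [integral_eq_lintegral_of_nonneg_ae (.of_forall fun _ => sq_nonneg _)
      (by fun_prop)]
    exact ENNReal.toReal_le_of_le_ofReal hc hcost
  refine le_trans (csInf_le ?_ ⟨π, inferInstance, h₁, h₂, rfl⟩) hcost'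
  refine ⟨0, ?_⟩
  rintro _ ⟨π', -, -, -, rfl⟩
  exact integral_nonneg fun _ => sq_nonneg _

theorem lintegral_norm_sub_sq_prod_le {μ ν : Measure (EuclideanSpace ℝ (Fin d))}
    [SFinite ν] {S : Set (EuclideanSpace ℝ (Fin d))} (hS : Bornology.IsBounded S)
    (hμS : ∀ᵐ x ∂μ, x ∈ S) (hνS : ∀ᵐ y ∂ν, y ∈ S) :
    ∫⁻ z, ENNReal.ofReal (‖z.1 - z.2‖ ^ 2) ∂μ.prod ν
      ≤ ENNReal.ofReal (Metric.diam S ^ 2) * (μ univ * ν univ) := by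
  rw [lintegral_prod _ (by fun_prop)]
  calc ∫⁻ x, ∫⁻ y, ENNReal.ofReal (‖x - y‖ ^ 2) ∂ν ∂μ
      ≤ ∫⁻ _x, ∫⁻ _y, ENNReal.ofReal (Metric.diam S ^ 2) ∂ν ∂μ := by
        refine lintegral_mono_ae ?_
        filter_upwards [hμS] with x hx
        refine lintegral_mono_ae ?_
        filter_upwards [hνS] with y hy
        rw [← dist_eq_norm]
        gcongr
        exact Metric.dist_le_diam_of_mem hS hx hy
    _ = _ := by simp only [lintegral_const]; ring

theorem measure_univ_eq_of_map_add {X Y : Type*} [MeasurableSpace X] [MeasurableSpace Y]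
    {γ : Measure (X × Y)} {μ μ' : Measure X} {ν ν' : Measure Y} [IsFiniteMeasure μ]
    (hμ : γ.map Prod.fst + μ' = μ) (hν : γ.map Prod.snd + ν' = ν) (huniv : μ univ = ν univ) :
    μ' univ = ν' univ := by
  have hγ_univ : γ.map Prod.fst univ = γ.map Prod.snd univ := by
    rw [Measure.map_apply measurable_fst .univ, Measure.map_apply measurable_snd .univ]
    rfl
  have hγ_fin : γ.map Prod.fst univ ≠ ∞ :=
    ne_top_of_le_ne_top (measure_ne_top μ univ) (hμ ▸ le_self_add)
  have h : (γ.map Prod.fst + μ') univ = (γ.map Prod.snd + ν') univ := by rw [hμ, hν, huniv]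
  simp only [Measure.add_apply] at h
  rwa [hγ_univ, ENNReal.add_right_inj (hγ_univ ▸ hγ_fin)] at h

theorem map_add_inv_smul_prod {X Y : Type*} [MeasurableSpace X] [MeasurableSpace Y]
    (γ : Measure (X × Y)) {μ' : Measure X} {ν' : Measure Y} [IsFiniteMeasure ν']
    (hmass : μ' univ = ν' univ) :
    (γ + (ν' univ)⁻¹ • μ'.prod ν').map Prod.fst = γ.map Prod.fst + μ' ∧
      (γ + (ν' univ)⁻¹ • μ'.prod ν').map Prod.snd = γ.map Prod.snd + ν' := by
  rw [Measure.map_add _ _ measurable_fst, Measure.map_add _ _ measurable_snd, Measure.map_smul,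
    Measure.map_smul, Measure.map_fst_prod, Measure.map_snd_prod, hmass, smul_smul, smul_smul]
  rcases eq_or_ne (ν' univ) 0 with h0 | h0
  · rw [Measure.measure_univ_eq_zero.mp h0, Measure.measure_univ_eq_zero.mp (hmass.trans h0)]
    simp
  · rw [ENNReal.inv_mul_cancel h0 (measure_ne_top ν' univ), one_smul, one_smul]
    exact ⟨rfl, rfl⟩

/-- The part of the mass left unmatched by a partial coupling `γ` is transported by the
product coupling, at cost at most `diam S ^ 2` per unit of mass. -/
theorem W2sq_le_of_partial_coupling {μ ν μ' ν' : Measure (EuclideanSpace ℝ (Fin d))}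
    [IsProbabilityMeasure μ] [IsProbabilityMeasure ν]
    (γ : Measure (EuclideanSpace ℝ (Fin d) × EuclideanSpace ℝ (Fin d)))
    (hμ : γ.map Prod.fst + μ' = μ) (hν : γ.map Prod.snd + ν' = ν)
    {S : Set (EuclideanSpace ℝ (Fin d))} (hS : Bornology.IsBounded S)
    (hμ'S : ∀ᵐ x ∂μ', x ∈ S) (hν'S : ∀ᵐ y ∂ν', y ∈ S) {a : ℝ} (ha : 0 ≤ a)
    (hγ : ∫⁻ z, ENNReal.ofReal (‖z.1 - z.2‖ ^ 2) ∂γ ≤ ENNReal.ofReal a) :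
    W2sq μ ν ≤ a + Metric.diam S ^ 2 * (ν' univ).toReal := by
  have hmass : μ' univ = ν' univ :=
    measure_univ_eq_of_map_add hμ hν (by rw [measure_univ, measure_univ])
  have hν'_fin : ν' univ ≠ ∞ :=
    ne_top_of_le_ne_top (measure_ne_top ν univ) (hν ▸ le_add_self)
  have : IsFiniteMeasure ν' := ⟨hν'_fin.lt_top⟩
  obtain ⟨h₁, h₂⟩ := map_add_inv_smul_prod γ hmass
  rw [hμ] at h₁
  rw [hν] at h₂
  have : IsProbabilityMeasure (γ + (ν' univ)⁻¹ • μ'.prod ν') := by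
    constructor
    rw [← measure_univ (μ := μ), ← h₁, Measure.map_apply measurable_fst .univ]
    rfl
  refine W2sq_le_of_coupling _ h₁ h₂ (by positivity) ?_
  rw [lintegral_add_measure, lintegral_smul_measure, ENNReal.ofReal_add ha (by positivity),
    ENNReal.ofReal_mul (by positivity), ENNReal.ofReal_toReal hν'_fin]
  gcongr
  calc (ν' univ)⁻¹ * ∫⁻ z, ENNReal.ofReal (‖z.1 - z.2‖ ^ 2) ∂μ'.prod ν'
      ≤ (ν' univ)⁻¹ * (ENNReal.ofReal (Metric.diam S ^ 2) * (ν' univ * ν' univ)) := by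
        gcongr
        exact (lintegral_norm_sub_sq_prod_le hS hμ'S hν'S).trans_eq (by rw [hmass])
    _ ≤ ENNReal.ofReal (Metric.diam S ^ 2) * ν' univ := by
        rcases eq_or_ne (ν' univ) 0 with h0 | h0
        · simp [h0]
        · rw [mul_left_comm, ← mul_assoc (ν' univ)⁻¹, ENNReal.inv_mul_cancel h0 hν'_fin, one_mul]

theorem W2sq_le_diam_sq {μ ν : Measure (EuclideanSpace ℝ (Fin d))}
    [IsProbabilityMeasure μ] [IsProbabilityMeasure ν]
    {S : Set (EuclideanSpace ℝ (Fin d))} (hS : Bornology.IsBounded S)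
    (hμS : ∀ᵐ x ∂μ, x ∈ S) (hνS : ∀ᵐ y ∂ν, y ∈ S) :
    W2sq μ ν ≤ Metric.diam S ^ 2 := by
  simpa using W2sq_le_of_partial_coupling (μ' := μ) (ν' := ν) 0 (by simp) (by simp) hS hμS hνS
    le_rfl (by simp)

end Coupling

section Partition

variable {ι : Type*} [Fintype ι] {α : Type*} [MeasurableSpace α]

theorem MeasureTheory.Measure.map_fintype_sum {β : Type*} [MeasurableSpace β] {f : α → β}
    (hf : Measurable f) (μ : ι → Measure α) : (∑ k, μ k).map f = ∑ k, (μ k).map f := by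
  simp only [← Measure.mapₗ_apply_of_measurable hf, _root_.map_sum]

theorem MeasureTheory.Measure.map_fst_map_prodMk_const {β : Type*} [MeasurableSpace β] (μ : Measure α)
    (y : β) : (μ.map fun x => (x, y)).map Prod.fst = μ := by
  rw [Measure.map_map measurable_fst (by fun_prop)]
  exact Measure.map_id

theorem MeasureTheory.Measure.map_snd_map_prodMk_const {β : Type*} [MeasurableSpace β] (μ : Measure α)
    (y : β) : (μ.map fun x => (x, y)).map Prod.snd = μ univ • Measure.dirac y := by
  rw [Measure.map_map measurable_snd (by fun_prop)]
  exact Measure.map_const _ _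

theorem sum_restrict_eq_self_of_ae_mem_iUnion {ν : Measure α} {C : ι → Set α}
    (hCm : ∀ k, MeasurableSet (C k)) (hCd : Pairwise (Disjoint on C))
    (hνC : ∀ᵐ x ∂ν, x ∈ ⋃ k, C k) : ∑ k, ν.restrict (C k) = ν := by
  rw [← Measure.sum_fintype, ← Measure.restrict_iUnion hCd hCm,
    Measure.restrict_eq_self_of_ae_mem hνC]

theorem sum_measure_eq_measure_univ_of_ae_mem_iUnion {ν : Measure α} {C : ι → Set α}
    (hCm : ∀ k, MeasurableSet (C k)) (hCd : Pairwise (Disjoint on C))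
    (hνC : ∀ᵐ x ∂ν, x ∈ ⋃ k, C k) : ∑ k, ν (C k) = ν univ := by
  simpa using congrArg (· univ) (sum_restrict_eq_self_of_ae_mem_iUnion hCm hCd hνC)

theorem ae_mem_of_sum_smul_dirac [MeasurableSingletonClass α] {S : Set α} (c : ι → ℝ≥0∞)
    {y : ι → α} (hy : ∀ k, y k ∈ S) : ∀ᵐ x ∂∑ k, c k • Measure.dirac (y k), x ∈ S := by
  rw [ae_finsetSum_measure_iff]
  exact fun k _ => Measure.ae_smul_measure ((ae_dirac_eq (y k)).symm ▸ hy k) _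

variable {d : ℕ}

theorem W2sq_le_of_partition {ν : Measure (EuclideanSpace ℝ (Fin d))} [IsProbabilityMeasure ν]
    {C : ι → Set (EuclideanSpace ℝ (Fin d))} (hCm : ∀ k, MeasurableSet (C k))
    (hCd : Pairwise (Disjoint on C)) (hνC : ∀ᵐ x ∂ν, x ∈ ⋃ k, C k)
    (y : ι → EuclideanSpace ℝ (Fin d)) (r : ι → ℝ≥0∞) (hr : ∑ k, r k = 1)
    {S : Set (EuclideanSpace ℝ (Fin d))} (hS : Bornology.IsBounded S) (hνS : ∀ᵐ x ∂ν, x ∈ S)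
    (hyS : ∀ k, y k ∈ S) {ε : ℝ} (hε : 0 ≤ ε) (hCy : ∀ k, ∀ x ∈ C k, ‖x - y k‖ ^ 2 ≤ ε) :
    W2sq ν (∑ k, r k • Measure.dirac (y k))
      ≤ ε + Metric.diam S ^ 2 * (∑ k, (r k - ν (C k))).toReal := by
  have hν_sum := sum_restrict_eq_self_of_ae_mem_iUnion hCm hCd hνC
  -- the fraction of the mass of `C k` that is sent to `y k`
  set s : ι → ℝ≥0∞ := fun k => min 1 (r k / ν (C k))
  have hs : ∀ k, s k ≤ 1 := fun k => min_le_left _ _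
  set γ := ∑ k, s k • (ν.restrict (C k)).map (fun x => (x, y k))
  have : IsProbabilityMeasure (∑ k, r k • Measure.dirac (y k)) := ⟨by simp [hr]⟩
  refine (W2sq_le_of_partial_coupling γ (μ' := ∑ k, (1 - s k) • ν.restrict (C k))
    (ν' := ∑ k, (r k - ν (C k)) • Measure.dirac (y k)) ?_ ?_ hS ?_
    (ae_mem_of_sum_smul_dirac _ hyS) hε ?_).trans_eq (by simp)
  · rw [Measure.map_fintype_sum measurable_fst, ← Finset.sum_add_distrib]
    conv_rhs => rw [← hν_sum]
    refine Finset.sum_congr rfl fun k _ => ?_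
    rw [Measure.map_smul, Measure.map_fst_map_prodMk_const, ← add_smul,
      add_tsub_cancel_of_le (hs k), one_smul]
  · rw [Measure.map_fintype_sum measurable_snd, ← Finset.sum_add_distrib]
    refine Finset.sum_congr rfl fun k _ => ?_
    rw [Measure.map_smul, Measure.map_snd_map_prodMk_const, Measure.restrict_apply_univ,
      smul_smul, ← add_smul, min_one_div_mul_add_tsub (measure_ne_top ν _)]
  · refine ae_mono ?_ hνS
    calc _ ≤ ∑ k, (1 : ℝ≥0∞) • ν.restrict (C k) := by gcongr; exact tsub_le_self
      _ = ν := by simp only [one_smul, hν_sum]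
  · have hmass : ∑ k, ν (C k) = 1 :=
      (sum_measure_eq_measure_univ_of_ae_mem_iUnion hCm hCd hνC).trans measure_univ
    have hcell : ∀ k, ∫⁻ x in C k, ENNReal.ofReal (‖x - y k‖ ^ 2) ∂ν
        ≤ ENNReal.ofReal ε * ν (C k) := fun k =>
      (setLIntegral_mono' (hCm k) fun x hx => ENNReal.ofReal_le_ofReal (hCy k x hx)).trans_eq
        (setLIntegral_const _ _)
    calc ∫⁻ z, ENNReal.ofReal (‖z.1 - z.2‖ ^ 2) ∂γ
        = ∑ k, s k * ∫⁻ x in C k, ENNReal.ofReal (‖x - y k‖ ^ 2) ∂ν := by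
          simp only [γ, lintegral_finsetSum_measure, lintegral_smul_measure]
          congr! 2 with k
          rw [lintegral_map (by fun_prop) (by fun_prop)]
      _ ≤ ∑ k, 1 * (ENNReal.ofReal ε * ν (C k)) := by gcongr with k; exacts [hs k, hcell k]
      _ = ENNReal.ofReal ε := by simp only [one_mul, ← Finset.mul_sum, hmass, mul_one]

end Partition

section Grid

variable {d : ℕ}

theorem gridCell_eq_preimage (v : EuclideanSpace ℝ (Fin d)) (h : ℝ) :
    gridCell v h = (MeasurableEquiv.toLp 2 (Fin d → ℝ)).symm ⁻¹'
      (Set.pi univ fun i => Ico (v i) (v i + h)) := by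
  ext x
  simp [gridCell, Set.mem_pi, Ico]

theorem measurableSet_gridCell (v : EuclideanSpace ℝ (Fin d)) (h : ℝ) :
    MeasurableSet (gridCell v h) := by
  rw [gridCell_eq_preimage]
  exact (MeasurableEquiv.toLp 2 (Fin d → ℝ)).symm.measurable
    (MeasurableSet.univ_pi fun i => measurableSet_Ico)

theorem volume_gridCell (v : EuclideanSpace ℝ (Fin d)) {h : ℝ} (hh : 0 ≤ h) :
    volume (gridCell v h) = ENNReal.ofReal (h ^ d) := by
  rw [gridCell_eq_preimage,
    (EuclideanSpace.volume_preserving_symm_measurableEquiv_toLp (Fin d)).measure_preimage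
      (MeasurableSet.univ_pi fun i => measurableSet_Ico).nullMeasurableSet]
  simp [Real.volume_pi_Ico, ENNReal.ofReal_pow hh]

theorem norm_sub_le_of_mem_gridCell {v x : EuclideanSpace ℝ (Fin d)} {h : ℝ} (hh : 0 ≤ h)
    (hx : x ∈ gridCell v h) : ‖x - v‖ ≤ √d * h := by
  have hcoord : ∀ i, ‖(x - v) i‖ ^ 2 ≤ h ^ 2 := fun i => by
    rw [PiLp.sub_apply, Real.norm_eq_abs, sq_abs]
    nlinarith [hx i]
  calc ‖x - v‖ = √(∑ i, ‖(x - v) i‖ ^ 2) := EuclideanSpace.norm_eq _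
    _ ≤ √(∑ _i : Fin d, h ^ 2) := Real.sqrt_le_sqrt (Finset.sum_le_sum fun i _ => hcoord i)
    _ = √d * h := by simp [Real.sqrt_mul (Nat.cast_nonneg d), Real.sqrt_sq hh]

theorem sum_abs_withDensity_gridCell_sub_le {M : Set (EuclideanSpace ℝ (Fin d))}
    (hM : Bornology.IsBounded M) {f : EuclideanSpace ℝ (Fin d) → ℝ} {L : ℝ≥0}
    (hf : LipschitzWith L f) (hf0 : ∀ x, 0 ≤ f x) {ι : Type*} [Fintype ι]
    {pts : ι → EuclideanSpace ℝ (Fin d)} {ζ : ℝ} (hζ : 0 < ζ)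
    (hdisj : Pairwise (Disjoint on fun k => gridCell (pts k) ζ)) (hmem : ∀ k, pts k ∈ M) :
    ∑ k, |((volume.withDensity fun x => ENNReal.ofReal (f x)) (gridCell (pts k) ζ)).toReal
        - f (pts k) * ζ ^ d|
      ≤ L * (√d * ζ) * (volume (Metric.cthickening (√d * ζ) M)).toReal := by
  have hvol : ∀ k, (volume (gridCell (pts k) ζ)).toReal = ζ ^ d := fun k => by
    rw [volume_gridCell _ hζ.le, ENNReal.toReal_ofReal (by positivity)]
  have hcell : ∀ k, ∀ x ∈ gridCell (pts k) ζ, |f x - f (pts k)| ≤ L * (√d * ζ) :=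
    fun k x hx => by
      rw [← Real.dist_eq]
      exact hf.dist_le_mul_of_le (dist_eq_norm x _ ▸ norm_sub_le_of_mem_gridCell hζ.le hx)
  have hsub : (⋃ k, gridCell (pts k) ζ) ⊆ Metric.cthickening (√d * ζ) M :=
    iUnion_subset fun k x hx => Metric.mem_cthickening_of_dist_le x (pts k) _ M (hmem k)
      (dist_eq_norm x _ ▸ norm_sub_le_of_mem_gridCell hζ.le hx)
  calc _ ≤ ∑ k, L * (√d * ζ) * (volume (gridCell (pts k) ζ)).toReal :=
        Finset.sum_le_sum fun k _ => hvol k ▸ abs_toReal_withDensity_sub_le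
          (measurableSet_gridCell _ _) (by simp [volume_gridCell _ hζ.le]) (hf0 _)
          (by positivity) (hcell k)
    _ = L * (√d * ζ) * (volume (⋃ k, gridCell (pts k) ζ)).toReal := by
        rw [← Finset.mul_sum, measure_iUnion hdisj fun k => measurableSet_gridCell _ _,
          tsum_fintype, ENNReal.toReal_sum fun k _ => by simp [volume_gridCell _ hζ.le]]
    _ ≤ L * (√d * ζ) * (volume (Metric.cthickening (√d * ζ) M)).toReal := by
        gcongr
        exact hM.cthickening.measure_lt_top.ne

theorem W2sq_grid_le {M : Set (EuclideanSpace ℝ (Fin d))} (hM : Bornology.IsBounded M)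
    {ν : Measure (EuclideanSpace ℝ (Fin d))} [IsProbabilityMeasure ν] (hνM : ν Mᶜ = 0)
    {f : EuclideanSpace ℝ (Fin d) → ℝ} {L : ℝ≥0} (hf : LipschitzWith L f) (hf0 : ∀ x, 0 ≤ f x)
    (hdens : ν = volume.withDensity (fun x => ENNReal.ofReal (f x))) {ι : Type*} [Fintype ι]
    {pts : ι → EuclideanSpace ℝ (Fin d)} {ζ : ℝ} (hζ : 0 < ζ)
    (hdisj : Pairwise (Disjoint on fun k => gridCell (pts k) ζ))
    (hcover : M ⊆ ⋃ k, gridCell (pts k) ζ) (hmem : ∀ k, pts k ∈ M)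
    (hS : 0 < ∑ j, f (pts j)) :
    W2sq ν (∑ k, ENNReal.ofReal (f (pts k) / ∑ j, f (pts j)) • Measure.dirac (pts k))
      ≤ d * ζ ^ 2 + Metric.diam M ^ 2 *
        (2 * (L * (√d * ζ) * (volume (Metric.cthickening (√d * ζ) M)).toReal)) := by
  have hνM' : ∀ᵐ x ∂ν, x ∈ M := ae_iff.2 hνM
  have hcell : ∀ k, ∀ x ∈ gridCell (pts k) ζ, ‖x - pts k‖ ^ 2 ≤ d * ζ ^ 2 := fun k x hx => by
    have h := pow_le_pow_left₀ (norm_nonneg _) (norm_sub_le_of_mem_gridCell hζ.le hx) 2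
    rwa [mul_pow, Real.sq_sqrt (Nat.cast_nonneg d)] at h
  have hνC : ∀ᵐ x ∂ν, x ∈ ⋃ k, gridCell (pts k) ζ := hνM'.mono fun x hx => hcover hx
  refine (W2sq_le_of_partition (fun k => measurableSet_gridCell (pts k) ζ) hdisj hνC pts _
    (sum_ofReal_div_sum_eq_one (fun k => hf0 _) hS) hM hνM' hmem (by positivity) hcell).trans ?_
  gcongr
  set q : ι → ℝ := fun k => f (pts k) * ζ ^ d
  have hq : ∀ k, f (pts k) / ∑ j, f (pts j) = q k / ∑ j, q j := fun k => by
    rw [← Finset.sum_mul, mul_div_mul_right _ _ (pow_pos hζ d).ne']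
  calc _ ≤ ∑ k, |f (pts k) / ∑ j, f (pts j) - (ν (gridCell (pts k) ζ)).toReal| :=
        toReal_sum_ofReal_tsub_le _ fun k => measure_ne_top ν _
    _ ≤ 2 * ∑ k, |q k - (ν (gridCell (pts k) ζ)).toReal| := by
        simp only [hq]
        refine sum_abs_div_sum_sub_le ?_ (fun k => mul_nonneg (hf0 _) (pow_pos hζ d).le) ?_
        · rw [← ENNReal.toReal_sum fun k _ => measure_ne_top ν _,
            sum_measure_eq_measure_univ_of_ae_mem_iUnion (fun k => measurableSet_gridCell _ _)
              hdisj hνC, measure_univ, ENNReal.toReal_one]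
        · simp only [q, ← Finset.sum_mul]
          exact mul_pos hS (pow_pos hζ d)
    _ ≤ _ := by
        gcongr
        simp_rw [abs_sub_comm (q _)]
        exact hdens ▸ sum_abs_withDensity_gridCell_sub_le hM hf hf0 hζ hdisj hmem

end Grid

/-- Grid approximation of a continuous measure: if `ν` is an absolutely continuous
probability measure on a compact set `M` with Lipschitz density `f`, and
`ν_r` is the discrete measure placing mass proportional to `f(d_k)` at the vertices `d_k`
of an equidistant rectangular grid with mesh `ζ` whose cells cover `M`, then
`W₂²(ν, ν_r) ≤ C·ζ` for a constant `C` not depending on the grid; in particular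
`W₂²(ν, ν_r) → 0` as `ζ → 0`. -/
theorem W2sq_grid_approx {d : ℕ} (M : Set (EuclideanSpace ℝ (Fin d)))
    (hM : IsCompact M) (ν : Measure (EuclideanSpace ℝ (Fin d)))
    [IsProbabilityMeasure ν] (hνM : ν Mᶜ = 0)
    (f : EuclideanSpace ℝ (Fin d) → ℝ) (L : NNReal) (hf : LipschitzWith L f)
    (hf0 : ∀ x, 0 ≤ f x)
    (hdens : ν = volume.withDensity (fun x => ENNReal.ofReal (f x))) :
    ∃ C > (0 : ℝ), ∀ (m : ℕ) (pts : Fin m → EuclideanSpace ℝ (Fin d)) (ζ : ℝ),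
      0 < ζ →
      Function.Injective pts →
      (∀ k l, k ≠ l → ζ ≤ ‖pts k - pts l‖) →
      (∀ k l, k ≠ l → Disjoint (gridCell (pts k) ζ) (gridCell (pts l) ζ)) →
      M ⊆ ⋃ k, gridCell (pts k) ζ →
      (∀ k, pts k ∈ M) →
      0 < ∑ j, f (pts j) →
      W2sq ν (∑ k, ENNReal.ofReal (f (pts k) / ∑ j, f (pts j)) •
        Measure.dirac (pts k)) ≤ C * ζ := by
  set D := Metric.diam M ^ 2
  set V := (volume (Metric.cthickening √d M)).toReal
  refine ⟨d + D * (2 * (L * √d * V)) + D + 1, by positivity, ?_⟩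
  intro m pts ζ hζ _ _ hdisj hcover hmem hS
  have hD : 0 ≤ D := by positivity
  have hDV : 0 ≤ D * (2 * (L * √d * V)) := by positivity
  rcases le_or_gt ζ 1 with hζ1 | hζ1
  · have hV : (volume (Metric.cthickening (√d * ζ) M)).toReal ≤ V := by
      refine ENNReal.toReal_mono hM.cthickening.measure_lt_top.ne (measure_mono ?_)
      exact Metric.cthickening_mono (mul_le_of_le_one_right (Real.sqrt_nonneg _) hζ1) M
    calc _ ≤ d * ζ ^ 2 + D * (2 * (L * (√d * ζ) *
          (volume (Metric.cthickening (√d * ζ) M)).toReal)) :=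
          W2sq_grid_le hM.isBounded hνM hf hf0 hdens hζ (fun k l h => hdisj k l h) hcover hmem hS
      _ ≤ d * ζ + D * (2 * (L * (√d * ζ) * V)) := by
          gcongr
          nlinarith
      _ = (d + D * (2 * (L * √d * V))) * ζ := by ring
      _ ≤ _ := mul_le_mul_of_nonneg_right (by linarith) hζ.le
  · have : IsProbabilityMeasure
        (∑ k, ENNReal.ofReal (f (pts k) / ∑ j, f (pts j)) • Measure.dirac (pts k)) :=
      ⟨by simp [sum_ofReal_div_sum_eq_one (fun k => hf0 _) hS]⟩
    calc _ ≤ D := W2sq_le_diam_sq hM.isBounded (ae_iff.2 hνM) (ae_mem_of_sum_smul_dirac _ hmem)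
      _ ≤ D * ζ := le_mul_of_one_le_right hD hζ1.le
      _ ≤ _ := by gcongr; linarith [Nat.cast_nonneg (α := ℝ) d]
end

section
/- Let ν₀ be an absolutely continuous probability measure on compact convex M ⊂ ℝ^d and let T(M) be an admissible class of deformations: a convex, compact (in L²(ν₀)) set of bijective gradients of convex functions containing the identity and closed under T_i∘T_j⁻¹. Let ν = T_#ν₀ with T random in T(M), and let s(X,x) be weights with E[s(X,x)] = 1. Then the minimizer μ over {T₀#ν₀ : T₀ ∈ T(M)} of E[s(X,x)·W₂²(μ, ν)] exists, is unique, and equals T̃_#ν₀ where T̃ is the metric projection in L²(ν₀;ℝ^d) of w ↦ E[s(X,x)·T_ν(w)] onto T(M) (T_ν being the optimal map from ν to ν₀ composed appropriately). -/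
open MeasureTheory ProbabilityTheory Set Filter

/-- `T` is the gradient of a convex function on ℝ^d. -/
def IsGradientOfConvex {d : ℕ} (T : EuclideanSpace ℝ (Fin d) → EuclideanSpace ℝ (Fin d)) :
    Prop :=
  ∃ φ : EuclideanSpace ℝ (Fin d) → ℝ, ConvexOn ℝ univ φ ∧ ∀ x, HasGradientAt φ (T x) x

/-- An admissible class of deformations relative to a base measure `ν₀`: a convex,
L²(ν₀)-(sequentially) compact set of measurable bijective gradients of convex functions
containing the identity and closed under `T_i ∘ T_j⁻¹`. -/
structure AdmissibleClass {d : ℕ} (ν₀ : Measure (EuclideanSpace ℝ (Fin d)))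
    (𝒯 : Set (EuclideanSpace ℝ (Fin d) → EuclideanSpace ℝ (Fin d))) : Prop where
  id_mem : id ∈ 𝒯
  gradient : ∀ T ∈ 𝒯, IsGradientOfConvex T
  measurable : ∀ T ∈ 𝒯, Measurable T
  bijective : ∀ T ∈ 𝒯, Function.Bijective T
  comp_inv_mem : ∀ Ti ∈ 𝒯, ∀ Tj ∈ 𝒯, Ti ∘ Function.invFun Tj ∈ 𝒯
  convex : ∀ T₁ ∈ 𝒯, ∀ T₂ ∈ 𝒯, ∀ a : ℝ, 0 ≤ a → a ≤ 1 →
    (fun w => a • T₁ w + (1 - a) • T₂ w) ∈ 𝒯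
  compact : ∀ f : ℕ → (EuclideanSpace ℝ (Fin d) → EuclideanSpace ℝ (Fin d)),
    (∀ n, f n ∈ 𝒯) → ∃ g ∈ 𝒯, ∃ φ : ℕ → ℕ, StrictMono φ ∧
      Tendsto (fun n => ∫ w, ‖f (φ n) w - g w‖ ^ 2 ∂ν₀) atTop (nhds 0)

/-!
For maps in an admissible class, `S = T₁ ∘ T₂⁻¹` is the gradient of a convex function `φ`.
The potentials `‖x‖² - 2φ*(x)` and `‖y‖² - 2φ(y)`, with `φ*` the Legendre transform, certify
that the deterministic coupling `(T₁, T₂)#ν₀` is optimal, so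
`W₂²(T₁#ν₀, T₂#ν₀) = ‖T₁ - T₂‖²` in `L²(ν₀)`. Expanding the squares and exchanging the
integrals in `ω` and `w` shows that the weighted Fréchet objective and `T₀ ↦ ‖T₀ - m‖²`,
`m = E[s T]`, differ by a constant on the class. The class is a compact convex subset of
`L²(ν₀)`, so the Hilbert projection theorem gives a nearest point `T̃` to `m`, unique up to
`ν₀`-null sets, which is all the push-forward `T̃#ν₀` sees.

Gradients of differentiable convex functions are continuous, so `(ω, w) ↦ s(ω) T_ω(w)` is a
Carathéodory function; this gives the joint measurability needed for Fubini.
-/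

section Gradient

variable {F : Type*} [NormedAddCommGroup F] [InnerProductSpace ℝ F] [CompleteSpace F]
  {φ : F → ℝ}

theorem HasGradientAt.hasLineDerivAt_inner {p x : F} (h : HasGradientAt φ p x) (v : F) :
    HasLineDerivAt ℝ φ (inner ℝ p v) x v := by
  simpa using h.hasFDerivAt.hasLineDerivAt v

theorem ConvexOn.add_inner_le_of_hasGradientAt (hφ : ConvexOn ℝ univ φ) {p x : F}
    (h : HasGradientAt φ p x) (y : F) : φ x + inner ℝ p (y - x) ≤ φ y := by
  have hline : HasDerivAt (φ ∘ AffineMap.lineMap x y) (inner ℝ p (y - x)) (0 : ℝ) := by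
    simpa using h.hasFDerivAt.comp_hasDerivAt_of_eq (0 : ℝ) AffineMap.hasDerivAt_lineMap
      (AffineMap.lineMap_apply_zero x y).symm
  have := (hφ.comp_affineMap (AffineMap.lineMap x y)).le_slope_of_hasDerivAt
    (mem_univ 0) (mem_univ 1) one_pos hline
  simp only [slope, sub_zero, inv_one, Function.comp_apply, AffineMap.lineMap_apply_one,
    AffineMap.lineMap_apply_zero, vsub_eq_sub, smul_eq_mul, one_mul] at this
  linarith

theorem ConvexOn.continuous_of_hasGradientAt [FiniteDimensional ℝ F] (hφ : ConvexOn ℝ univ φ)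
    {g : F → F} (hg : ∀ x, HasGradientAt φ (g x) x) : Continuous g := by
  -- `⟪g x, v⟫` is the infimum over `t > 0` of the quotients `(φ (x + t • v) - φ x) / t`,
  -- each of which is continuous in `x`
  have husc : ∀ v, UpperSemicontinuous fun x => inner ℝ (g x) v := by
    intro v x c hc
    obtain ⟨t, hlt, ht⟩ := (((hg x).hasLineDerivAt_inner v).tendsto_slope_zero_right.eventually
        (gt_mem_nhds hc) |>.and self_mem_nhdsWithin).exists
    have hφc : Continuous φ := continuousOn_univ.1 (hφ.continuousOn isOpen_univ)
    have hquot : Continuous fun x' => t⁻¹ • (φ (x' + t • v) - φ x') := by fun_prop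
    filter_upwards [hquot.continuousAt.eventually (gt_mem_nhds hlt)] with x' hx'
    refine lt_of_le_of_lt ?_ hx'
    have := hφ.add_inner_le_of_hasGradientAt (hg x') (x' + t • v)
    rw [add_sub_cancel_left, inner_smul_right] at this
    rw [smul_eq_mul, le_inv_mul_iff₀ ht]
    linarith
  have hlsc : ∀ v, LowerSemicontinuous fun x => inner ℝ (g x) v := fun v x c hc => by
    filter_upwards [husc (-v) x (-c) (by simpa [inner_neg_right] using hc)] with x' hx'
    simpa [inner_neg_right] using hx'
  have hcont : ∀ v, Continuous fun x => inner ℝ (g x) v := fun v =>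
    continuous_iff_lower_upperSemicontinuous.2 ⟨hlsc v, husc v⟩
  let b := stdOrthonormalBasis ℝ F
  have hg_eq : g = fun x => ∑ i, inner ℝ (g x) (b i) • b i := by
    ext1 x
    simp_rw [real_inner_comm _ (g x)]
    exact (b.sum_repr' (g x)).symm
  rw [hg_eq]
  fun_prop

end Gradient

theorem Continuous.integrable_of_ae_mem_isCompact {α E : Type*} [TopologicalSpace α]
    [T2Space α] [MeasurableSpace α] [OpensMeasurableSpace α] [NormedAddCommGroup E]
    {μ : Measure α} [IsFiniteMeasure μ] {K : Set α} (hK : IsCompact K)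
    (hμK : ∀ᵐ x ∂μ, x ∈ K) {f : α → E} (hf : Continuous f) : Integrable f μ := by
  rw [← Measure.restrict_eq_self_of_ae_mem hμK]
  exact hf.continuousOn.integrableOn_compact hK

theorem integral_comp_prodMk_le_of_le_add {γ α β : Type*} [MeasurableSpace γ]
    [MeasurableSpace α] [MeasurableSpace β] {μ : Measure γ} {T₁ : γ → α} {T₂ : γ → β}
    (h₁ : Measurable T₁) (h₂ : Measurable T₂) {π : Measure (α × β)}
    (hπ₁ : π.map Prod.fst = μ.map T₁) (hπ₂ : π.map Prod.snd = μ.map T₂)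
    {c : α × β → ℝ} {a : α → ℝ} {b : β → ℝ} (hle : ∀ x y, a x + b y ≤ c (x, y))
    (heq : ∀ w, a (T₁ w) + b (T₂ w) = c (T₁ w, T₂ w)) (ha : Integrable a (μ.map T₁))
    (hb : Integrable b (μ.map T₂)) (hc : Integrable c π) :
    ∫ w, c (T₁ w, T₂ w) ∂μ ≤ ∫ p, c p ∂π := by
  have ha' : Integrable (fun p => a p.1) π := (hπ₁ ▸ ha).comp_measurable measurable_fst
  have hb' : Integrable (fun p => b p.2) π := (hπ₂ ▸ hb).comp_measurable measurable_snd
  have hA : Integrable (fun w => a (T₁ w)) μ := ha.comp_measurable h₁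
  have hB : Integrable (fun w => b (T₂ w)) μ := hb.comp_measurable h₂
  calc ∫ w, c (T₁ w, T₂ w) ∂μ = ∫ x, a x ∂(μ.map T₁) + ∫ y, b y ∂(μ.map T₂) := by
        rw [integral_map h₁.aemeasurable ha.1, integral_map h₂.aemeasurable hb.1,
          ← integral_add hA hB]
        exact integral_congr_ae (Eventually.of_forall fun w => (heq w).symm)
    _ = ∫ p, (a p.1 + b p.2) ∂π := by
        rw [← hπ₁, ← hπ₂, integral_map measurable_fst.aemeasurable (hπ₁ ▸ ha.1),
          integral_map measurable_snd.aemeasurable (hπ₂ ▸ hb.1), integral_add ha' hb']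
    _ ≤ ∫ p, c p ∂π := integral_mono (ha'.add hb') hc fun p => hle p.1 p.2

section Wasserstein

variable {d : ℕ} {μ : Measure (EuclideanSpace ℝ (Fin d))} [IsProbabilityMeasure μ]
  {T₁ T₂ : EuclideanSpace ℝ (Fin d) → EuclideanSpace ℝ (Fin d)}

theorem W2sq_map_eq_of_forall_coupling (h₁ : Measurable T₁) (h₂ : Measurable T₂)
    (hopt : ∀ π : Measure (EuclideanSpace ℝ (Fin d) × EuclideanSpace ℝ (Fin d)),
      IsProbabilityMeasure π →
      π.map Prod.fst = μ.map T₁ → π.map Prod.snd = μ.map T₂ →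
        ∫ w, ‖T₁ w - T₂ w‖ ^ 2 ∂μ ≤ ∫ p, ‖p.1 - p.2‖ ^ 2 ∂π) :
    W2sq (μ.map T₁) (μ.map T₂) = ∫ w, ‖T₁ w - T₂ w‖ ^ 2 ∂μ := by
  have hpair : Measurable fun w => (T₁ w, T₂ w) := h₁.prodMk h₂
  have hmem : ∫ w, ‖T₁ w - T₂ w‖ ^ 2 ∂μ ∈ {c : ℝ | ∃ π : Measure (_ × _), IsProbabilityMeasure π ∧
      π.map Prod.fst = μ.map T₁ ∧ π.map Prod.snd = μ.map T₂ ∧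
      c = ∫ p, ‖p.1 - p.2‖ ^ 2 ∂π} := by
    refine ⟨μ.map fun w => (T₁ w, T₂ w), Measure.isProbabilityMeasure_map hpair.aemeasurable,
      ?_, ?_, ?_⟩
    · rw [Measure.map_map measurable_fst hpair]; rfl
    · rw [Measure.map_map measurable_snd hpair]; rfl
    · rw [integral_map hpair.aemeasurable (by fun_prop)]
  refine le_antisymm (csInf_le ⟨0, ?_⟩ hmem) (le_csInf ⟨_, hmem⟩ ?_)
  · rintro _ ⟨π, -, -, -, rfl⟩
    exact integral_nonneg fun _ => by positivity
  · rintro _ ⟨π, hπ, hπ₁, hπ₂, rfl⟩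
    exact hopt π hπ hπ₁ hπ₂

theorem W2sq_map_eq_of_hasGradientAt {K : Set (EuclideanSpace ℝ (Fin d))} (hK : IsCompact K)
    (h₁ : Measurable T₁) (h₂ : Measurable T₂) (hK₁ : ∀ᵐ w ∂μ, T₁ w ∈ K)
    (hK₂ : ∀ᵐ w ∂μ, T₂ w ∈ K) {φ : EuclideanSpace ℝ (Fin d) → ℝ} (hφ : ConvexOn ℝ univ φ)
    {S u : EuclideanSpace ℝ (Fin d) → EuclideanSpace ℝ (Fin d)}
    (hS : ∀ x, HasGradientAt φ (S x) x) (hu : Continuous u) (hSu : Function.LeftInverse S u)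
    (huS : Function.LeftInverse u S)
    (hT : ∀ w, T₁ w = S (T₂ w)) :
    W2sq (μ.map T₁) (μ.map T₂) = ∫ w, ‖T₁ w - T₂ w‖ ^ 2 ∂μ := by
  have hφc : Continuous φ := continuousOn_univ.1 (hφ.continuousOn isOpen_univ)
  -- the Legendre transform of `φ`, computed through `u = (∇φ)⁻¹`
  set ψ : EuclideanSpace ℝ (Fin d) → ℝ := fun x => inner ℝ x (u x) - φ (u x)
  have hψc : Continuous ψ := (continuous_id.inner hu).sub (hφc.comp hu)
  have hyoung : ∀ x y, inner ℝ x y ≤ ψ x + φ y := fun x y => by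
    have := hφ.add_inner_le_of_hasGradientAt (hS (u x)) y
    rw [hSu x, inner_sub_right] at this
    linarith
  have hgraph : ∀ y, ψ (S y) + φ y = inner ℝ (S y) y := fun y => by
    simp only [ψ, huS y]; ring
  have hmapK : ∀ {T}, Measurable T → (∀ᵐ w ∂μ, T w ∈ K) → ∀ᵐ x ∂(μ.map T), x ∈ K :=
    fun hT hTK => (ae_map_iff hT.aemeasurable hK.isClosed.measurableSet).2 hTK
  refine W2sq_map_eq_of_forall_coupling h₁ h₂ fun π hπ hπ₁ hπ₂ => ?_
  have hπK : ∀ᵐ p ∂π, p ∈ K ×ˢ K := by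
    filter_upwards [ae_of_ae_map measurable_fst.aemeasurable (hπ₁ ▸ hmapK h₁ hK₁),
      ae_of_ae_map measurable_snd.aemeasurable (hπ₂ ▸ hmapK h₂ hK₂)] with p hp₁ hp₂
    exact ⟨hp₁, hp₂⟩
  refine integral_comp_prodMk_le_of_le_add h₁ h₂ hπ₁ hπ₂
    (a := fun x => ‖x‖ ^ 2 - 2 * ψ x) (b := fun y => ‖y‖ ^ 2 - 2 * φ y)
    (c := fun p => ‖p.1 - p.2‖ ^ 2) (fun x y => ?_) (fun w => ?_)
    ((by fun_prop : Continuous _).integrable_of_ae_mem_isCompact hK (hmapK h₁ hK₁))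
    ((by fun_prop : Continuous _).integrable_of_ae_mem_isCompact hK (hmapK h₂ hK₂))
    ((by fun_prop : Continuous _).integrable_of_ae_mem_isCompact (hK.prod hK) hπK)
  · rw [norm_sub_sq_real]; linarith [hyoung x y]
  · rw [hT w, norm_sub_sq_real]; linarith [hgraph (T₂ w)]

end Wasserstein

open TopologicalSpace in
theorem aestronglyMeasurable_uncurry_of_continuous {Ω X E : Type*} [MeasurableSpace Ω]
    {μ : Measure Ω} [TopologicalSpace X] [MetrizableSpace X] [SecondCountableTopology X]
    [MeasurableSpace X] [OpensMeasurableSpace X] {ν : Measure X} [SFinite ν]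
    [TopologicalSpace E] [PseudoMetrizableSpace E] [Zero E] {F : Ω → X → E}
    (hcont : ∀ ω, Continuous (F ω)) (hmeas : ∀ x, AEStronglyMeasurable (fun ω => F ω x) μ) :
    AEStronglyMeasurable (Function.uncurry F) (μ.prod ν) := by
  obtain ⟨D, hDc, hD⟩ := exists_countable_dense X
  have := hDc.to_subtype
  -- off the null set `N`, every slice `F · y`, `y ∈ D`, agrees with a strongly measurable version;
  -- setting `F` to `0` on `N` gives a function to which the Carathéodory criterion applies
  set N := toMeasurable μ {ω | ¬ ∀ y : D, F ω y = (hmeas y).mk _ ω}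
  have hN : μ N = 0 := by
    rw [measure_toMeasurable]
    exact ae_iff.1 (ae_all_iff.2 fun y => (hmeas y).ae_eq_mk)
  have hFN : ∀ ω ∉ N, ∀ y : D, F ω y = (hmeas y).mk _ ω := fun ω hω =>
    not_not.1 fun h => hω (subset_toMeasurable _ _ h)
  set G : X → Ω → E := fun x => Nᶜ.indicator fun ω => F ω x
  have hGcont : ∀ ω, Continuous fun x => G x ω := fun ω => by
    by_cases hω : ω ∈ N <;> simp [G, hω, hcont ω, continuous_const]
  have hGmeas : ∀ x, StronglyMeasurable (G x) := fun x => by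
    obtain ⟨y, hyD, hy⟩ := mem_closure_iff_seq_limit.1 (hD.closure_eq ▸ mem_univ x)
    refine stronglyMeasurable_of_tendsto _ (fun k => ?_)
      (tendsto_pi_nhds.2 fun ω => ((hGcont ω).tendsto x).comp hy)
    have hGy : G (y k) = Nᶜ.indicator ((hmeas (y k)).mk _) := by
      ext ω
      by_cases hω : ω ∈ N
      · simp [G, hω]
      · simp [G, hω, hFN ω hω ⟨y k, hyD k⟩]
    change StronglyMeasurable (G (y k))
    rw [hGy]
    exact (hmeas _).stronglyMeasurable_mk.indicator (measurableSet_toMeasurable _ _).compl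
  refine ⟨fun p => G p.2 p.1, (stronglyMeasurable_uncurry_of_continuous_of_stronglyMeasurable
    hGcont hGmeas).comp_measurable measurable_swap, ?_⟩
  filter_upwards [Measure.quasiMeasurePreserving_fst.ae (measure_eq_zero_iff_ae_notMem.1 hN)]
    with p hp
  simp [G, hp, Function.uncurry_def]

section Hilbert

variable {H : Type*} [NormedAddCommGroup H] [InnerProductSpace ℝ H]

theorem norm_sub_sq_sub_norm_sub_sq (a b c : H) :
    ‖a - c‖ ^ 2 - ‖b - c‖ ^ 2 = ‖a‖ ^ 2 - ‖b‖ ^ 2 - 2 * inner ℝ (a - b) c := by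
  rw [norm_sub_sq_real, norm_sub_sq_real, inner_sub_left]
  ring

theorem existsUnique_forall_norm_sub_le_of_complete_convex {K : Set H} (hne : K.Nonempty)
    (hK : IsComplete K) (hconv : Convex ℝ K) (u : H) :
    ∃! v, v ∈ K ∧ ∀ w ∈ K, ‖u - v‖ ≤ ‖u - w‖ := by
  have := hne.to_subtype
  have hbdd : BddBelow (range fun w : K => ‖u - w‖) := ⟨0, by rintro _ ⟨w, rfl⟩; positivity⟩
  have hmin_iff : ∀ v ∈ K, ‖u - v‖ = (⨅ w : K, ‖u - w‖) ↔ ∀ w ∈ K, ‖u - v‖ ≤ ‖u - w‖ :=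
    fun v hv => ⟨fun h w hw => h ▸ ciInf_le hbdd ⟨w, hw⟩,
      fun h => le_antisymm (le_ciInf fun w => h w w.2) (ciInf_le hbdd ⟨v, hv⟩)⟩
  obtain ⟨v, hv, hvmin⟩ := exists_norm_eq_iInf_of_complete_convex hne hK hconv u
  refine ⟨v, ⟨hv, (hmin_iff v hv).1 hvmin⟩, fun v' ⟨hv', hv'min⟩ => ?_⟩
  have h₁ := (norm_eq_iInf_iff_real_inner_le_zero hconv hv).1 hvmin v' hv'
  have h₂ := (norm_eq_iInf_iff_real_inner_le_zero hconv hv').1 ((hmin_iff v' hv').2 hv'min) v hv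
  have hsum : inner ℝ (u - v) (v' - v) + inner ℝ (u - v') (v - v') = ‖v' - v‖ ^ 2 := by
    rw [← real_inner_self_eq_norm_sq]
    simp only [inner_sub_left, inner_sub_right, real_inner_comm]
    ring
  have : ‖v' - v‖ = 0 := by nlinarith [norm_nonneg (v' - v)]
  exact sub_eq_zero.1 (norm_eq_zero.1 this)

end Hilbert

namespace MeasureTheory.Lp

variable {X E : Type*} [MeasurableSpace X] {ν : Measure X} [NormedAddCommGroup E]
  [InnerProductSpace ℝ E] {F G : Lp E 2 ν} {f g : X → E}

theorem norm_sub_sq_eq_integral (hF : F =ᵐ[ν] f) (hG : G =ᵐ[ν] g) :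
    ‖F - G‖ ^ 2 = ∫ x, ‖f x - g x‖ ^ 2 ∂ν := by
  rw [← real_inner_self_eq_norm_sq, L2.inner_def]
  refine integral_congr_ae ?_
  filter_upwards [Lp.coeFn_sub F G, hF, hG] with x hx hFx hGx
  rw [hx, Pi.sub_apply, hFx, hGx, real_inner_self_eq_norm_sq]

theorem inner_eq_integral (hF : F =ᵐ[ν] f) (hG : G =ᵐ[ν] g) :
    inner ℝ F G = ∫ x, inner ℝ (f x) (g x) ∂ν := by
  rw [L2.inner_def]
  refine integral_congr_ae ?_
  filter_upwards [hF, hG] with x hFx hGx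
  rw [hFx, hGx]

end MeasureTheory.Lp

section WeightedMean

variable {Ω X E : Type*} [MeasurableSpace Ω] [MeasurableSpace X] {μ : Measure Ω}
  {ν : Measure X} [NormedAddCommGroup E] [InnerProductSpace ℝ E] {s : Ω → ℝ} {T : Ω → X → E}
  {C : ℝ}

theorem integrable_smul_uncurry [IsFiniteMeasure ν] (hs : Integrable s μ)
    (hmeas : AEStronglyMeasurable (fun p : Ω × X => s p.1 • T p.1 p.2) (μ.prod ν))
    (hbound : ∀ᵐ x ∂ν, ∀ ω, ‖T ω x‖ ≤ C) :
    Integrable (fun p : Ω × X => s p.1 • T p.1 p.2) (μ.prod ν) := by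
  refine Integrable.mono' ((hs.norm.comp_fst ν).mul_const C) hmeas ?_
  filter_upwards [Measure.quasiMeasurePreserving_snd.ae hbound] with p hp
  rw [norm_smul]
  exact mul_le_mul_of_nonneg_left (hp p.1) (norm_nonneg _)

theorem memLp_integral_smul [IsFiniteMeasure ν] [SFinite μ] (hs : Integrable s μ)
    (hmeas : AEStronglyMeasurable (fun p : Ω × X => s p.1 • T p.1 p.2) (μ.prod ν))
    (hbound : ∀ᵐ x ∂ν, ∀ ω, ‖T ω x‖ ≤ C) (p : ENNReal) :
    MemLp (fun x => ∫ ω, s ω • T ω x ∂μ) p ν := by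
  refine MemLp.of_bound hmeas.prod_swap.integral_prod_right' ((∫ ω, ‖s ω‖ ∂μ) * C) ?_
  filter_upwards [hbound] with x hx
  rw [← integral_mul_const]
  refine norm_integral_le_of_norm_le (hs.norm.mul_const C) (Eventually.of_forall fun ω => ?_)
  rw [norm_smul]
  exact mul_le_mul_of_nonneg_left (hx ω) (norm_nonneg _)

theorem integral_mul_inner_eq_inner [CompleteSpace E] [IsFiniteMeasure ν] [SFinite μ]
    (hs : Integrable s μ)
    (hmeas : AEStronglyMeasurable (fun p : Ω × X => s p.1 • T p.1 p.2) (μ.prod ν))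
    (hbound : ∀ᵐ x ∂ν, ∀ ω, ‖T ω x‖ ≤ C) {t : Ω → Lp E 2 ν} (ht : ∀ ω, t ω =ᵐ[ν] T ω)
    {m : Lp E 2 ν} (hm : m =ᵐ[ν] fun x => ∫ ω, s ω • T ω x ∂μ) (H : Lp E 2 ν) :
    Integrable (fun ω => s ω * inner ℝ H (t ω)) μ ∧
      ∫ ω, s ω * inner ℝ H (t ω) ∂μ = inner ℝ H m := by
  have hH : Integrable H ν := (Lp.memLp H).integrable one_le_two
  have hslice : ∀ ω, s ω * inner ℝ H (t ω) = ∫ x, inner ℝ (H x) (s ω • T ω x) ∂ν :=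
    fun ω => by
      simp_rw [Lp.inner_eq_integral (EventuallyEq.refl _ H) (ht ω), inner_smul_right,
        integral_const_mul]
  have hprod : Integrable (fun p : Ω × X => inner ℝ (H p.2) (s p.1 • T p.1 p.2))
      (μ.prod ν) := by
    refine Integrable.mono' ((hs.norm.mul_prod hH.norm).mul_const C)
      (hH.aestronglyMeasurable.comp_snd.inner hmeas) ?_
    filter_upwards [Measure.quasiMeasurePreserving_snd.ae hbound] with p hp
    calc ‖inner ℝ (H p.2) (s p.1 • T p.1 p.2)‖ ≤ ‖H p.2‖ * (‖s p.1‖ * ‖T p.1 p.2‖) := by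
          rw [← norm_smul]; exact norm_inner_le_norm _ _
      _ ≤ ‖s p.1‖ * ‖H p.2‖ * C := by
          rw [mul_left_comm, mul_assoc]; gcongr; exact hp p.1
  simp_rw [hslice]
  refine ⟨hprod.integral_prod_left, ?_⟩
  rw [integral_integral_swap hprod, Lp.inner_eq_integral (EventuallyEq.refl _ H) hm]
  refine integral_congr_ae ?_
  filter_upwards [(integrable_smul_uncurry hs hmeas hbound).prod_left_ae] with x hx
  exact integral_inner hx (H x)

theorem integral_mul_integral_norm_sub_sq_sub [CompleteSpace E] [IsFiniteMeasure ν]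
    [SFinite μ] (hs : Integrable s μ) (hs1 : ∫ ω, s ω ∂μ = 1)
    (hmeas : AEStronglyMeasurable (fun p : Ω × X => s p.1 • T p.1 p.2) (μ.prod ν))
    (hbound : ∀ᵐ x ∂ν, ∀ ω, ‖T ω x‖ ≤ C) (hT : ∀ ω, MemLp (T ω) 2 ν) {a b : X → E}
    (ha : MemLp a 2 ν) (hb : MemLp b 2 ν)
    (hia : Integrable (fun ω => s ω * ∫ x, ‖a x - T ω x‖ ^ 2 ∂ν) μ)
    (hib : Integrable (fun ω => s ω * ∫ x, ‖b x - T ω x‖ ^ 2 ∂ν) μ) :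
    ∫ ω, s ω * ∫ x, ‖a x - T ω x‖ ^ 2 ∂ν ∂μ - ∫ ω, s ω * ∫ x, ‖b x - T ω x‖ ^ 2 ∂ν ∂μ =
      ∫ x, ‖a x - ∫ ω, s ω • T ω x ∂μ‖ ^ 2 ∂ν - ∫ x, ‖b x - ∫ ω, s ω • T ω x ∂μ‖ ^ 2 ∂ν := by
  have hm := memLp_integral_smul hs hmeas hbound 2
  have hT_L2 : ∀ {f : X → E} (hf : MemLp f 2 ν) ω,
      ∫ x, ‖f x - T ω x‖ ^ 2 ∂ν = ‖hf.toLp f - (hT ω).toLp (T ω)‖ ^ 2 := fun hf ω =>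
    (Lp.norm_sub_sq_eq_integral hf.coeFn_toLp (hT ω).coeFn_toLp).symm
  have hm_L2 : ∀ {f : X → E} (hf : MemLp f 2 ν),
      ∫ x, ‖f x - ∫ ω, s ω • T ω x ∂μ‖ ^ 2 ∂ν = ‖hf.toLp f - hm.toLp _‖ ^ 2 := fun hf =>
    (Lp.norm_sub_sq_eq_integral hf.coeFn_toLp hm.coeFn_toLp).symm
  simp_rw [hT_L2 ha, hT_L2 hb] at hia hib ⊢
  rw [hm_L2 ha, hm_L2 hb, ← integral_sub hia hib]
  set A := ha.toLp a
  set B := hb.toLp b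
  obtain ⟨hint, heq⟩ := integral_mul_inner_eq_inner hs hmeas hbound
    (fun ω => (hT ω).coeFn_toLp) hm.coeFn_toLp (A - B)
  have hpt : ∀ ω, s ω * ‖A - (hT ω).toLp (T ω)‖ ^ 2 - s ω * ‖B - (hT ω).toLp (T ω)‖ ^ 2 =
      (‖A‖ ^ 2 - ‖B‖ ^ 2) * s ω - 2 * (s ω * inner ℝ (A - B) ((hT ω).toLp (T ω))) :=
    fun ω => by rw [← mul_sub, norm_sub_sq_sub_norm_sub_sq]; ring
  simp_rw [hpt]
  rw [integral_sub (hs.const_mul _) (hint.const_mul 2), integral_const_mul, integral_const_mul,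
    hs1, heq, norm_sub_sq_sub_norm_sub_sq]
  ring

end WeightedMean

namespace AdmissibleClass

variable {d : ℕ} {ν₀ : Measure (EuclideanSpace ℝ (Fin d))}
  {𝒯 : Set (EuclideanSpace ℝ (Fin d) → EuclideanSpace ℝ (Fin d))}

theorem continuous (h𝒯 : AdmissibleClass ν₀ 𝒯)
    {T : EuclideanSpace ℝ (Fin d) → EuclideanSpace ℝ (Fin d)} (hT : T ∈ 𝒯) : Continuous T :=
  have ⟨_, hφ, hg⟩ := h𝒯.gradient T hT
  hφ.continuous_of_hasGradientAt hg

theorem W2sq_map_eq [IsProbabilityMeasure ν₀] (h𝒯 : AdmissibleClass ν₀ 𝒯)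
    {M : Set (EuclideanSpace ℝ (Fin d))} (hM : IsCompact M) (h𝒯M : ∀ T ∈ 𝒯, ∀ᵐ w ∂ν₀, T w ∈ M)
    {T₁ T₂ : EuclideanSpace ℝ (Fin d) → EuclideanSpace ℝ (Fin d)} (h₁ : T₁ ∈ 𝒯) (h₂ : T₂ ∈ 𝒯) :
    W2sq (ν₀.map T₁) (ν₀.map T₂) = ∫ w, ‖T₁ w - T₂ w‖ ^ 2 ∂ν₀ := by
  have hS := h𝒯.comp_inv_mem T₁ h₁ T₂ h₂
  have hSbij := h𝒯.bijective _ hS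
  obtain ⟨φ, hφ, hφS⟩ := h𝒯.gradient _ hS
  have hu := h𝒯.comp_inv_mem id h𝒯.id_mem _ hS
  refine W2sq_map_eq_of_hasGradientAt hM (h𝒯.measurable T₁ h₁) (h𝒯.measurable T₂ h₂)
    (h𝒯M T₁ h₁) (h𝒯M T₂ h₂) hφ hφS (h𝒯.continuous hu)
    (Function.rightInverse_invFun hSbij.surjective)
    (Function.leftInverse_invFun hSbij.injective) fun w => ?_
  simp [Function.leftInverse_invFun (h𝒯.bijective T₂ h₂).injective w]

theorem isCompact_setOf_ae_eq (h𝒯 : AdmissibleClass ν₀ 𝒯) (hL2 : ∀ T ∈ 𝒯, MemLp T 2 ν₀) :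
    IsCompact {F : Lp (EuclideanSpace ℝ (Fin d)) 2 ν₀ | ∃ T ∈ 𝒯, F =ᵐ[ν₀] T} := by
  refine IsSeqCompact.isCompact fun F hF => ?_
  choose T hT hFT using hF
  obtain ⟨g, hg, φ, hφ, hlim⟩ := h𝒯.compact T hT
  refine ⟨(hL2 g hg).toLp g, ⟨g, hg, MemLp.coeFn_toLp _⟩, φ, hφ, ?_⟩
  rw [tendsto_iff_norm_sub_tendsto_zero]
  have hnorm : ∀ n,
      ‖F (φ n) - (hL2 g hg).toLp g‖ = √(∫ w, ‖T (φ n) w - g w‖ ^ 2 ∂ν₀) := fun n => by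
      rw [← Lp.norm_sub_sq_eq_integral (hFT (φ n)) (MemLp.coeFn_toLp _),
        Real.sqrt_sq (norm_nonneg _)]
  simpa only [Function.comp_apply, hnorm, Real.sqrt_zero] using hlim.sqrt

theorem convex_setOf_ae_eq (h𝒯 : AdmissibleClass ν₀ 𝒯) :
    Convex ℝ {F : Lp (EuclideanSpace ℝ (Fin d)) 2 ν₀ | ∃ T ∈ 𝒯, F =ᵐ[ν₀] T} := by
  rintro F ⟨T₁, h₁, hF⟩ G ⟨T₂, h₂, hG⟩ a b ha hb hab
  obtain rfl : b = 1 - a := by linarith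
  refine ⟨_, h𝒯.convex T₁ h₁ T₂ h₂ a ha (by linarith), ?_⟩
  filter_upwards [Lp.coeFn_add (a • F) ((1 - a) • G), Lp.coeFn_smul a F,
    Lp.coeFn_smul (1 - a) G, hF, hG] with w h h₁ h₂ hF hG
  rw [h, Pi.add_apply, h₁, h₂, Pi.smul_apply, Pi.smul_apply, hF, hG]

theorem exists_min_integral_norm_sub_sq_ae_unique (h𝒯 : AdmissibleClass ν₀ 𝒯)
    (hL2 : ∀ T ∈ 𝒯, MemLp T 2 ν₀) {m : EuclideanSpace ℝ (Fin d) → EuclideanSpace ℝ (Fin d)}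
    (hm : MemLp m 2 ν₀) :
    ∃ g ∈ 𝒯, (∀ T₀ ∈ 𝒯, ∫ w, ‖g w - m w‖ ^ 2 ∂ν₀ ≤ ∫ w, ‖T₀ w - m w‖ ^ 2 ∂ν₀) ∧
      ∀ T' ∈ 𝒯, (∀ T₀ ∈ 𝒯, ∫ w, ‖T' w - m w‖ ^ 2 ∂ν₀ ≤ ∫ w, ‖T₀ w - m w‖ ^ 2 ∂ν₀) →
        T' =ᵐ[ν₀] g := by
  have hne : {F : Lp (EuclideanSpace ℝ (Fin d)) 2 ν₀ | ∃ T ∈ 𝒯, F =ᵐ[ν₀] T}.Nonempty :=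
    ⟨_, id, h𝒯.id_mem, MemLp.coeFn_toLp (hL2 id h𝒯.id_mem)⟩
  obtain ⟨v, ⟨⟨g, hg, hvg⟩, hvmin⟩, hvuniq⟩ :=
    existsUnique_forall_norm_sub_le_of_complete_convex hne
      (h𝒯.isCompact_setOf_ae_eq hL2).isComplete h𝒯.convex_setOf_ae_eq (hm.toLp m)
  have hdist : ∀ {F : Lp (EuclideanSpace ℝ (Fin d)) 2 ν₀} {T₀}, F =ᵐ[ν₀] T₀ →
      ‖hm.toLp m - F‖ = √(∫ w, ‖T₀ w - m w‖ ^ 2 ∂ν₀) := fun hF => by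
    rw [norm_sub_rev, ← Lp.norm_sub_sq_eq_integral hF hm.coeFn_toLp,
      Real.sqrt_sq (norm_nonneg _)]
  have hle_iff : ∀ {F G : Lp (EuclideanSpace ℝ (Fin d)) 2 ν₀} {T₀ T₁}, F =ᵐ[ν₀] T₀ → G =ᵐ[ν₀] T₁ →
      (‖hm.toLp m - F‖ ≤ ‖hm.toLp m - G‖ ↔
        ∫ w, ‖T₀ w - m w‖ ^ 2 ∂ν₀ ≤ ∫ w, ‖T₁ w - m w‖ ^ 2 ∂ν₀) := fun hF hG => by
    rw [hdist hF, hdist hG, Real.sqrt_le_sqrt_iff (integral_nonneg fun _ => by positivity)]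
  refine ⟨g, hg, fun T₀ hT₀ => (hle_iff hvg (MemLp.coeFn_toLp _)).1
    (hvmin _ ⟨T₀, hT₀, MemLp.coeFn_toLp (hL2 T₀ hT₀)⟩), fun T' hT' hT'min => ?_⟩
  have hT'v := hvuniq ((hL2 T' hT').toLp T') ⟨⟨T', hT', MemLp.coeFn_toLp _⟩,
    fun G ⟨T₀, hT₀, hG⟩ => (hle_iff (MemLp.coeFn_toLp _) hG).2 (hT'min T₀ hT₀)⟩
  exact (MemLp.coeFn_toLp _).symm.trans ((congrArg (⇑) hT'v).eventuallyEq.trans hvg)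

end AdmissibleClass

theorem conditional_barycenter_exists_unique_general {d : ℕ} {Ω : Type*} [MeasureSpace Ω]
    [IsProbabilityMeasure (ℙ : Measure Ω)]
    (M : Set (EuclideanSpace ℝ (Fin d))) (hMc : IsCompact M)
    (ν₀ : Measure (EuclideanSpace ℝ (Fin d))) [IsProbabilityMeasure ν₀]
    (hsupp : ν₀ Mᶜ = 0)
    (𝒯 : Set (EuclideanSpace ℝ (Fin d) → EuclideanSpace ℝ (Fin d)))
    (h𝒯 : AdmissibleClass ν₀ 𝒯) (hrange : ∀ T ∈ 𝒯, MapsTo T M M)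
    (T : Ω → EuclideanSpace ℝ (Fin d) → EuclideanSpace ℝ (Fin d))
    (hT : ∀ ω, T ω ∈ 𝒯)
    (s : Ω → ℝ) (hs : Integrable s ℙ) (hs1 : ∫ ω, s ω ∂(ℙ : Measure Ω) = 1)
    (hsT : ∀ w, Integrable (fun ω => s ω • T ω w) ℙ)
    (hobj : ∀ T₀ ∈ 𝒯, Integrable
      (fun ω => s ω * W2sq (ν₀.map T₀) (ν₀.map (T ω))) ℙ) :
    ∃ Ttil ∈ 𝒯,
      (∀ T₀ ∈ 𝒯,
        (∫ w, ‖Ttil w - ∫ ω, s ω • T ω w ∂(ℙ : Measure Ω)‖ ^ 2 ∂ν₀) ≤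
        (∫ w, ‖T₀ w - ∫ ω, s ω • T ω w ∂(ℙ : Measure Ω)‖ ^ 2 ∂ν₀)) ∧
      (∀ T₀ ∈ 𝒯,
        (∫ ω, s ω * W2sq (ν₀.map Ttil) (ν₀.map (T ω)) ∂(ℙ : Measure Ω)) ≤
        (∫ ω, s ω * W2sq (ν₀.map T₀) (ν₀.map (T ω)) ∂(ℙ : Measure Ω))) ∧
      (∀ T' ∈ 𝒯,
        (∀ T₀ ∈ 𝒯,
          (∫ ω, s ω * W2sq (ν₀.map T') (ν₀.map (T ω)) ∂(ℙ : Measure Ω)) ≤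
          (∫ ω, s ω * W2sq (ν₀.map T₀) (ν₀.map (T ω)) ∂(ℙ : Measure Ω))) →
        ν₀.map T' = ν₀.map Ttil) := by
  have hM : ∀ᵐ w ∂ν₀, w ∈ M := ae_iff.2 hsupp
  have h𝒯M : ∀ T₀ ∈ 𝒯, ∀ᵐ w ∂ν₀, T₀ w ∈ M := fun T₀ h => hM.mono fun _ hw => hrange T₀ h hw
  obtain ⟨C, hC⟩ := hMc.isBounded.exists_norm_le
  have hL2 : ∀ T₀ ∈ 𝒯, MemLp T₀ 2 ν₀ := fun T₀ h =>
    .of_bound (h𝒯.measurable T₀ h).aestronglyMeasurable C ((h𝒯M T₀ h).mono fun w => hC _)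
  have hbound : ∀ᵐ w ∂ν₀, ∀ ω, ‖T ω w‖ ≤ C := hM.mono fun w hw ω => hC _ (hrange _ (hT ω) hw)
  have hmeas :
      AEStronglyMeasurable (fun p : Ω × _ => s p.1 • T p.1 p.2) ((ℙ : Measure Ω).prod ν₀) :=
    aestronglyMeasurable_uncurry_of_continuous (F := fun ω w => s ω • T ω w)
      (fun ω => (h𝒯.continuous (hT ω)).const_smul (s ω)) fun w => (hsT w).aestronglyMeasurable
  have hW : ∀ T₀ ∈ 𝒯, ∀ ω, W2sq (ν₀.map T₀) (ν₀.map (T ω)) = ∫ w, ‖T₀ w - T ω w‖ ^ 2 ∂ν₀ :=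
    fun T₀ h ω => h𝒯.W2sq_map_eq hMc h𝒯M h (hT ω)
  have hdiff : ∀ T₀ ∈ 𝒯, ∀ T₁ ∈ 𝒯,
      ∫ ω, s ω * W2sq (ν₀.map T₀) (ν₀.map (T ω)) ∂ℙ -
          ∫ ω, s ω * W2sq (ν₀.map T₁) (ν₀.map (T ω)) ∂ℙ =
        ∫ w, ‖T₀ w - ∫ ω, s ω • T ω w ∂ℙ‖ ^ 2 ∂ν₀ -
          ∫ w, ‖T₁ w - ∫ ω, s ω • T ω w ∂ℙ‖ ^ 2 ∂ν₀ := fun T₀ h₀ T₁ h₁ => by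
    have hobj₀ := hobj T₀ h₀
    have hobj₁ := hobj T₁ h₁
    simp_rw [hW T₀ h₀, hW T₁ h₁] at hobj₀ hobj₁ ⊢
    exact integral_mul_integral_norm_sub_sq_sub hs hs1 hmeas hbound (fun ω => hL2 _ (hT ω))
      (hL2 T₀ h₀) (hL2 T₁ h₁) hobj₀ hobj₁
  obtain ⟨g, hg, hgmin, hguniq⟩ :=
    h𝒯.exists_min_integral_norm_sub_sq_ae_unique hL2 (memLp_integral_smul hs hmeas hbound 2)
  refine ⟨g, hg, hgmin, fun T₀ hT₀ => ?_, fun T' hT' hT'min => ?_⟩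
  · linarith [hdiff T₀ hT₀ g hg, hgmin T₀ hT₀]
  · exact Measure.map_congr <| hguniq T' hT' fun T₀ hT₀ => by
      linarith [hdiff T' hT' T₀ hT₀, hT'min T₀ hT₀]

/-- Existence, uniqueness and characterization of the conditional Wasserstein barycenter
within an admissible deformation class: the minimizer of the weighted Fréchet objective
`E[s(X,x)·W₂²(μ, ν)]` over `{T₀#ν₀ : T₀ ∈ 𝒯}` exists, is unique, and is obtained as
`T̃#ν₀`, where `T̃` is the metric projection in `L²(ν₀;ℝ^d)` of
`w ↦ E[s(X,x)·T(w)]` onto `𝒯`. -/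
theorem conditional_barycenter_exists_unique {d : ℕ} {Ω : Type*} [MeasureSpace Ω]
    [IsProbabilityMeasure (ℙ : Measure Ω)]
    (M : Set (EuclideanSpace ℝ (Fin d))) (hMc : IsCompact M) (hMconv : Convex ℝ M)
    (ν₀ : Measure (EuclideanSpace ℝ (Fin d))) [IsProbabilityMeasure ν₀]
    (hac : ν₀ ≪ volume) (hsupp : ν₀ Mᶜ = 0)
    (𝒯 : Set (EuclideanSpace ℝ (Fin d) → EuclideanSpace ℝ (Fin d)))
    (h𝒯 : AdmissibleClass ν₀ 𝒯) (hrange : ∀ T ∈ 𝒯, MapsTo T M M)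
    (T : Ω → EuclideanSpace ℝ (Fin d) → EuclideanSpace ℝ (Fin d))
    (hT : ∀ ω, T ω ∈ 𝒯)
    (s : Ω → ℝ) (hs : Integrable s ℙ) (hs1 : ∫ ω, s ω ∂(ℙ : Measure Ω) = 1)
    (hsT : ∀ w, Integrable (fun ω => s ω • T ω w) ℙ)
    (hobj : ∀ T₀ ∈ 𝒯, Integrable
      (fun ω => s ω * W2sq (ν₀.map T₀) (ν₀.map (T ω))) ℙ) :
    ∃ Ttil ∈ 𝒯,
      (∀ T₀ ∈ 𝒯,
        (∫ w, ‖Ttil w - ∫ ω, s ω • T ω w ∂(ℙ : Measure Ω)‖ ^ 2 ∂ν₀) ≤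
        (∫ w, ‖T₀ w - ∫ ω, s ω • T ω w ∂(ℙ : Measure Ω)‖ ^ 2 ∂ν₀)) ∧
      (∀ T₀ ∈ 𝒯,
        (∫ ω, s ω * W2sq (ν₀.map Ttil) (ν₀.map (T ω)) ∂(ℙ : Measure Ω)) ≤
        (∫ ω, s ω * W2sq (ν₀.map T₀) (ν₀.map (T ω)) ∂(ℙ : Measure Ω))) ∧
      (∀ T' ∈ 𝒯,
        (∀ T₀ ∈ 𝒯,
          (∫ ω, s ω * W2sq (ν₀.map T') (ν₀.map (T ω)) ∂(ℙ : Measure Ω)) ≤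
          (∫ ω, s ω * W2sq (ν₀.map T₀) (ν₀.map (T ω)) ∂(ℙ : Measure Ω))) →
        ν₀.map T' = ν₀.map Ttil) :=
  conditional_barycenter_exists_unique_general M hMc ν₀ hsupp 𝒯 h𝒯 hrange T hT s hs hs1 hsT hobj
end
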